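/- arXiv:2004.09613 — 7 statements merged into one kernel-verified Lean document; each statement's English description precedes it below -/
import Mathlib

section
/- Let m ≥ 1 and let (L_t)_{t∈ℕ} be a stochastic process with values in {1,…,m}, adapted to a filtration (F_t), which is almost surely nondecreasing (L_{t+1} ≥ L_t for all t). Let T = inf{t : L_t = m}. Suppose there are numbers p_1,…,p_{m−1} ∈ (0,1] such that for every t ≥ 0 and every i < m, on the event {L_t = i}, the conditional probability P[L_{t+1} > i | F_t] ≥ p_i. Then E[T] ≤ ∑_{i=1}^{m−1} P[L_0 = i] · ∑_{j=i}^{m−1} 1/p_j ≤ ∑_{j=1}^{m−1} 1/p_j. (Fitness level method for upper bounds, in fixed-target form: the last level m need not consist of global optima, so choosing m to be any target level yields a fixed-target upper bound.) -/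
/-! Drift argument with the potential `Φ_t = ∑_{j<m} P[L_t ≤ j] / p_j`. On `{L_t = j}` the
process leaves level `j` with probability at least `p_j`, and by monotonicity the mass that leaves
`{L ≤ j}` never returns, so `Φ_{t+1} + P[L_t < m] ≤ Φ_t`. Telescoping gives
`E[T] = ∑_t P[L_t < m] ≤ Φ_0`, and exchanging the two sums in `Φ_0` gives the stated bound. -/

open MeasureTheory

/-- First time at which the level process `L` reaches level `m` (`⊤` if this never happens),
as an extended nonnegative real. -/
noncomputable def levelHitTime {Ω : Type*} (L : ℕ → Ω → ℕ) (m : ℕ) (ω : Ω) : ENNReal :=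
  sInf {r : ENNReal | ∃ t : ℕ, r = (t : ENNReal) ∧ L t ω = m}

open Finset
open scoped ENNReal

lemma levelHitTime_eq_tsum_indicator {Ω : Type*} {L : ℕ → Ω → ℕ} {m : ℕ} {ω : Ω}
    (hmono : Monotone fun t => L t ω) (hle : ∀ t, L t ω ≤ m) :
    levelHitTime L m ω = ∑' t, {ω' | L t ω' < m}.indicator (fun _ => (1 : ℝ≥0∞)) ω := by
  by_cases hhit : ∃ t, L t ω = m
  · have hbelow : ∀ t, L t ω < m ↔ t < Nat.find hhit := fun t =>
      ⟨fun h => lt_of_not_ge fun hT => h.not_ge (Nat.find_spec hhit ▸ hmono hT),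
        fun h => (hle t).lt_of_ne (Nat.find_min hhit h)⟩
    have hT : levelHitTime L m ω = Nat.find hhit :=
      le_antisymm (sInf_le ⟨_, rfl, Nat.find_spec hhit⟩)
        (le_sInf fun _ ⟨_, hr, ht⟩ => hr ▸ Nat.cast_le.mpr (Nat.find_le ht))
    simp_rw [hT, Set.indicator_apply, Set.mem_ofPred_eq, hbelow]
    rw [tsum_eq_sum (s := range (Nat.find hhit)) (by simp),
      sum_ite_of_true fun _ => mem_range.1]
    simp
  · push Not at hhit
    have hT : levelHitTime L m ω = ⊤ := by simp [levelHitTime, hhit]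
    simp [hT, (hle _).lt_of_ne (hhit _)]

lemma mul_measureReal_le_measureReal_inter_of_le_condExp {Ω : Type*} {m m₀ : MeasurableSpace Ω}
    {μ : Measure Ω} [IsFiniteMeasure μ] (hm : m ≤ m₀) {s A : Set Ω} (hs : MeasurableSet[m] s)
    (hA : MeasurableSet A) {c : ℝ}
    (hc : ∀ᵐ ω ∂μ, ω ∈ s → c ≤ μ[A.indicator fun _ => (1 : ℝ)|m] ω) :
    c * μ.real s ≤ μ.real (s ∩ A) :=
  calc c * μ.real s = ∫ _ in s, c ∂μ := by simp [mul_comm]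
    _ ≤ ∫ ω in s, μ[A.indicator fun _ => (1 : ℝ)|m] ω ∂μ :=
      setIntegral_mono_ae_restrict (integrableOn_const (measure_ne_top μ s))
        integrable_condExp.integrableOn ((ae_restrict_iff' (hm s hs)).2 hc)
    _ = ∫ ω in s, A.indicator (fun _ => (1 : ℝ)) ω ∂μ :=
      setIntegral_condExp hm ((integrable_const 1).indicator hA) hs
    _ = μ.real (s ∩ A) := by simp [setIntegral_indicator hA]

lemma measureReal_le_eq_sum_Icc {Ω : Type*} [MeasurableSpace Ω] {μ : Measure Ω}
    [IsFiniteMeasure μ] {f : Ω → ℕ} (hf : Measurable f) (hpos : ∀ ω, 1 ≤ f ω) (j : ℕ) :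
    μ.real {ω | f ω ≤ j} = ∑ i ∈ Icc 1 j, μ.real {ω | f ω = i} := by
  have hset : {ω | f ω ≤ j} = f ⁻¹' ↑(Icc 1 j) := by ext ω; simp [hpos ω]
  rw [hset, ← sum_measureReal_preimage_singleton _ fun i _ => hf (measurableSet_singleton i)]
  rfl

lemma sum_mul_le_of_sum_le_one {ι : Type*} {s : Finset ι} {w a : ι → ℝ} {B : ℝ}
    (hw : ∀ i ∈ s, 0 ≤ w i) (hsum : ∑ i ∈ s, w i ≤ 1) (ha : ∀ i ∈ s, a i ≤ B) (hB : 0 ≤ B) :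
    ∑ i ∈ s, w i * a i ≤ B :=
  calc ∑ i ∈ s, w i * a i ≤ ∑ i ∈ s, w i * B :=
        sum_le_sum fun i hi => mul_le_mul_of_nonneg_left (ha i hi) (hw i hi)
    _ = (∑ i ∈ s, w i) * B := (sum_mul _ _ _).symm
    _ ≤ B := mul_le_of_le_one_left hB hsum

noncomputable def levelPotential {Ω : Type*} [MeasurableSpace Ω] (μ : Measure Ω)
    (L : ℕ → Ω → ℕ) (p : ℕ → ℝ) (m t : ℕ) : ℝ :=
  ∑ j ∈ Icc 1 (m - 1), 1 / p j * μ.real {ω | L t ω ≤ j}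

section LevelProcess

variable {Ω : Type*} {m0 : MeasurableSpace Ω} {μ : Measure Ω}
  {ℱ : Filtration ℕ m0} {L : ℕ → Ω → ℕ} {m : ℕ} {p : ℕ → ℝ}

lemma lintegral_levelHitTime_eq_tsum (hL : ∀ t, Measurable (L t))
    (hmono : ∀ᵐ ω ∂μ, Monotone fun t => L t ω) (hle : ∀ t ω, L t ω ≤ m) :
    ∫⁻ ω, levelHitTime L m ω ∂μ = ∑' t, μ {ω | L t ω < m} := by
  have hlt : ∀ t, MeasurableSet {ω | L t ω < m} := fun t => hL t measurableSet_Iio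
  rw [lintegral_congr_ae (hmono.mono fun ω hω => levelHitTime_eq_tsum_indicator hω (hle · ω)),
    lintegral_tsum fun t => (measurable_const.indicator (hlt t)).aemeasurable]
  simp [lintegral_indicator (hlt _)]

lemma mul_measureReal_eq_add_measureReal_succ_le [IsFiniteMeasure μ]
    (hmeas : ∀ t, Measurable[ℱ t] (L t)) (hmono : ∀ᵐ ω ∂μ, ∀ t, L t ω ≤ L (t + 1) ω)
    {t j : ℕ} {c : ℝ}
    (hexit : ∀ᵐ ω ∂μ, L t ω = j →
      c ≤ (μ[Set.indicator {ω' | j < L (t + 1) ω'} (fun _ => (1 : ℝ))|ℱ t]) ω) :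
    c * μ.real {ω | L t ω = j} + μ.real {ω | L (t + 1) ω ≤ j} ≤ μ.real {ω | L t ω ≤ j} := by
  have hL : ∀ t, Measurable (L t) := fun t => (hmeas t).mono (ℱ.le t) le_rfl
  set exit := {ω | L t ω = j} ∩ {ω | j < L (t + 1) ω}
  have hexit_le : c * μ.real {ω | L t ω = j} ≤ μ.real exit :=
    mul_measureReal_le_measureReal_inter_of_le_condExp (ℱ.le t)
      (hmeas t (measurableSet_singleton j)) (hL (t + 1) measurableSet_Ioi) hexit
  have hdisj : Disjoint exit {ω | L (t + 1) ω ≤ j} :=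
    Set.disjoint_left.2 fun ω h (h' : L (t + 1) ω ≤ j) => h.2.not_ge h'
  have hunion : μ.real (exit ∪ {ω | L (t + 1) ω ≤ j}) ≤ μ.real {ω | L t ω ≤ j} :=
    ENNReal.toReal_mono (measure_ne_top μ _) <| measure_mono_ae <| hmono.mono
      fun ω hω => by rintro (⟨h, -⟩ | h); exacts [h.le, (hω t).trans h]
  rw [measureReal_union hdisj (hL (t + 1) measurableSet_Iic)] at hunion
  linarith

lemma levelPotential_nonneg (hp : ∀ i, 1 ≤ i → i < m → 0 < p i) (t : ℕ) :
    0 ≤ levelPotential μ L p m t :=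
  sum_nonneg fun j hj => by
    have := hp j (mem_Icc.1 hj).1 (by grind)
    positivity

lemma levelPotential_eq_sum_measureReal_eq [IsFiniteMeasure μ] (hL : ∀ t, Measurable (L t))
    (hpos : ∀ t ω, 1 ≤ L t ω) (t : ℕ) :
    levelPotential μ L p m t
      = ∑ i ∈ Icc 1 (m - 1), μ.real {ω | L t ω = i} * ∑ j ∈ Icc i (m - 1), 1 / p j := by
  simp_rw [levelPotential, measureReal_le_eq_sum_Icc (hL t) (hpos t), mul_sum]
  rw [sum_comm' (t' := Icc 1 (m - 1)) (s' := fun i => Icc i (m - 1)) (by grind)]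
  simp_rw [mul_comm]

lemma levelPotential_succ_add_measureReal_le [IsFiniteMeasure μ]
    (hmeas : ∀ t, Measurable[ℱ t] (L t))
    (hrange : ∀ t ω, L t ω ∈ Icc 1 m) (hmono : ∀ᵐ ω ∂μ, ∀ t, L t ω ≤ L (t + 1) ω)
    (hp : ∀ i, 1 ≤ i → i < m → 0 < p i)
    (hlevels : ∀ t : ℕ, ∀ i, 1 ≤ i → i < m → ∀ᵐ ω ∂μ, L t ω = i →
      p i ≤ (μ[Set.indicator {ω' | i < L (t + 1) ω'} (fun _ => (1 : ℝ))|ℱ t]) ω) (t : ℕ) :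
    levelPotential μ L p m (t + 1) + μ.real {ω | L t ω < m} ≤ levelPotential μ L p m t := by
  have hL : ∀ t, Measurable (L t) := fun t => (hmeas t).mono (ℱ.le t) le_rfl
  have hbelow : {ω | L t ω < m} = {ω | L t ω ≤ m - 1} := by
    ext ω; have := mem_Icc.1 (hrange t ω); simp only [Set.mem_ofPred_eq]; omega
  rw [hbelow, measureReal_le_eq_sum_Icc (hL t) fun ω => (mem_Icc.1 (hrange t ω)).1,
    levelPotential, levelPotential, ← sum_add_distrib]
  refine sum_le_sum fun j hj => ?_
  obtain ⟨hj1, hjm⟩ : 1 ≤ j ∧ j < m := by grind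
  have hpj := hp j hj1 hjm
  have hstep := mul_measureReal_eq_add_measureReal_succ_le hmeas hmono (hlevels t j hj1 hjm)
  calc 1 / p j * μ.real {ω | L (t + 1) ω ≤ j} + μ.real {ω | L t ω = j}
      = 1 / p j * (p j * μ.real {ω | L t ω = j} + μ.real {ω | L (t + 1) ω ≤ j}) := by
        field_simp; ring
    _ ≤ 1 / p j * μ.real {ω | L t ω ≤ j} := by gcongr

lemma tsum_measure_lt_le_ofReal_levelPotential [IsFiniteMeasure μ]
    (hmeas : ∀ t, Measurable[ℱ t] (L t))
    (hrange : ∀ t ω, L t ω ∈ Icc 1 m) (hmono : ∀ᵐ ω ∂μ, ∀ t, L t ω ≤ L (t + 1) ω)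
    (hp : ∀ i, 1 ≤ i → i < m → 0 < p i)
    (hlevels : ∀ t : ℕ, ∀ i, 1 ≤ i → i < m → ∀ᵐ ω ∂μ, L t ω = i →
      p i ≤ (μ[Set.indicator {ω' | i < L (t + 1) ω'} (fun _ => (1 : ℝ))|ℱ t]) ω) :
    ∑' t, μ {ω | L t ω < m} ≤ ENNReal.ofReal (levelPotential μ L p m 0) := by
  have htelescope : ∀ N, ∑ t ∈ range N, μ.real {ω | L t ω < m} + levelPotential μ L p m N
      ≤ levelPotential μ L p m 0 := by
    intro N
    induction N with
    | zero => simp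
    | succ N ih =>
      rw [sum_range_succ]
      linarith [levelPotential_succ_add_measureReal_le hmeas hrange hmono hp hlevels N]
  refine ENNReal.tsum_le_of_sum_range_le fun N => ?_
  calc ∑ t ∈ range N, μ {ω | L t ω < m}
      = ENNReal.ofReal (∑ t ∈ range N, μ.real {ω | L t ω < m}) := by
        simp [ENNReal.ofReal_sum_of_nonneg, ofReal_measureReal]
    _ ≤ ENNReal.ofReal (levelPotential μ L p m 0) := ENNReal.ofReal_le_ofReal <| by
        linarith [htelescope N, levelPotential_nonneg (μ := μ) (L := L) hp N]

end LevelProcess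

theorem fitness_levels_upper_general
    {Ω : Type*} {m0 : MeasurableSpace Ω} (μ : Measure Ω) [IsProbabilityMeasure μ]
    (ℱ : Filtration ℕ m0) (m : ℕ)
    (L : ℕ → Ω → ℕ) (hmeas : ∀ t, Measurable[ℱ t] (L t))
    (hrange : ∀ t ω, L t ω ∈ Finset.Icc 1 m)
    (hmono : ∀ᵐ ω ∂μ, ∀ t : ℕ, L t ω ≤ L (t + 1) ω)
    (p : ℕ → ℝ) (hp : ∀ i, 1 ≤ i → i < m → 0 < p i ∧ p i ≤ 1)
    (hlevels : ∀ t : ℕ, ∀ i, 1 ≤ i → i < m → ∀ᵐ ω ∂μ, L t ω = i →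
      p i ≤ (μ[Set.indicator {ω' | i < L (t + 1) ω'} (fun _ => (1 : ℝ))|ℱ t]) ω) :
    ∫⁻ ω, levelHitTime L m ω ∂μ
      ≤ ENNReal.ofReal (∑ i ∈ Finset.Icc 1 (m - 1),
          (μ {ω | L 0 ω = i}).toReal * ∑ j ∈ Finset.Icc i (m - 1), 1 / p j) ∧
    (∑ i ∈ Finset.Icc 1 (m - 1),
        (μ {ω | L 0 ω = i}).toReal * ∑ j ∈ Finset.Icc i (m - 1), 1 / p j)
      ≤ ∑ j ∈ Finset.Icc 1 (m - 1), 1 / p j := by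
  simp only [← measureReal_def]
  have hL : ∀ t, Measurable (L t) := fun t => (hmeas t).mono (ℱ.le t) le_rfl
  have hpos : ∀ t ω, 1 ≤ L t ω := fun t ω => (mem_Icc.1 (hrange t ω)).1
  have hp_pos : ∀ i, 1 ≤ i → i < m → 0 < p i := fun i h1 h2 => (hp i h1 h2).1
  have hinv_nonneg : ∀ j ∈ Icc 1 (m - 1), 0 ≤ 1 / p j := fun j hj =>
    one_div_nonneg.2 (hp_pos j (mem_Icc.1 hj).1 (by grind)).le
  refine ⟨?_, sum_mul_le_of_sum_le_one (fun _ _ => measureReal_nonneg) ?_ (fun i hi => ?_)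
    (sum_nonneg hinv_nonneg)⟩
  · rw [lintegral_levelHitTime_eq_tsum hL (hmono.mono fun _ => monotone_nat_of_le_succ)
      fun t ω => (mem_Icc.1 (hrange t ω)).2, ← levelPotential_eq_sum_measureReal_eq hL hpos]
    exact tsum_measure_lt_le_ofReal_levelPotential hmeas hrange hmono hp_pos hlevels
  · rw [← measureReal_le_eq_sum_Icc (hL 0) (hpos 0)]
    exact measureReal_le_one
  · exact sum_le_sum_of_subset_of_nonneg (Icc_subset_Icc_left (mem_Icc.1 hi).1)
      fun j hj _ => hinv_nonneg j hj

/-- Fitness level method for upper bounds, fixed-target form: for a nondecreasing adapted level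
process `L` on `{1,…,m}` with `T = inf{t : L_t = m}`, if on the event `{L_t = i}` (for `i < m`)
the conditional probability of leaving level `i` is at least `p_i ∈ (0,1]`, then
`E[T] ≤ ∑_{i=1}^{m−1} P[L_0 = i] · ∑_{j=i}^{m−1} 1/p_j ≤ ∑_{j=1}^{m−1} 1/p_j`. -/
theorem fitness_levels_upper
    {Ω : Type*} {m0 : MeasurableSpace Ω} (μ : Measure Ω) [IsProbabilityMeasure μ]
    (ℱ : Filtration ℕ m0) (m : ℕ) (hm : 1 ≤ m)
    (L : ℕ → Ω → ℕ) (hmeas : ∀ t, Measurable[ℱ t] (L t))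
    (hrange : ∀ t ω, L t ω ∈ Finset.Icc 1 m)
    (hmono : ∀ᵐ ω ∂μ, ∀ t : ℕ, L t ω ≤ L (t + 1) ω)
    (p : ℕ → ℝ) (hp : ∀ i, 1 ≤ i → i < m → 0 < p i ∧ p i ≤ 1)
    (hlevels : ∀ t : ℕ, ∀ i, 1 ≤ i → i < m → ∀ᵐ ω ∂μ, L t ω = i →
      p i ≤ (μ[Set.indicator {ω' | i < L (t + 1) ω'} (fun _ => (1 : ℝ))|ℱ t]) ω) :
    ∫⁻ ω, levelHitTime L m ω ∂μ
      ≤ ENNReal.ofReal (∑ i ∈ Finset.Icc 1 (m - 1),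
          (μ {ω | L 0 ω = i}).toReal * ∑ j ∈ Finset.Icc i (m - 1), 1 / p j) ∧
    (∑ i ∈ Finset.Icc 1 (m - 1),
        (μ {ω | L 0 ω = i}).toReal * ∑ j ∈ Finset.Icc i (m - 1), 1 / p j)
      ≤ ∑ j ∈ Finset.Icc 1 (m - 1), 1 / p j :=
  fitness_levels_upper_general μ ℱ m L hmeas hrange hmono p hp hlevels
end

section
/- Let m ≥ 1 and let (L_t)_{t∈ℕ} be a stochastic process with values in {1,…,m}, adapted to a filtration (F_t), which is almost surely nondecreasing. Let T = inf{t : L_t = m}. Suppose there are numbers s_1,…,s_{m−1} > 0, numbers γ_{i,j} ≥ 0 for 1 ≤ i < j ≤ m with ∑_{j=i+1}^m γ_{i,j} = 1 for each i < m, and some χ ∈ [0,1] with γ_{i,j} ≤ χ · ∑_{l=j}^m γ_{i,l} for all 1 ≤ i < j < m, and with (1−χ)·s_i ≤ s_{i+1} for all 1 ≤ i ≤ m−2, such that for every t ≥ 0 and all 1 ≤ i < j ≤ m, on the event {L_t = i}, the conditional probability P[L_{t+1} = j | F_t] ≥ s_i · γ_{i,j}. Then E[T] ≤ ∑_{i=1}^{m−1}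 P[L_0 = i] · (1/s_i + χ · ∑_{j=i+1}^{m−1} 1/s_j). -/
open MeasureTheory

/-!
An additive drift argument with the potential `H i = 1/s_i + χ ∑_{i<l<m} 1/s_l` for `i < m`
and `H m = 0`, so that `E[H(L_0)]` is the claimed bound. The condition `(1-χ) s_i ≤ s_{i+1}` makes
`H` nonincreasing, hence nonnegative, on the levels. Abel summation turns
`∑_{j>i} γ_{ij} (H_i - H_j)` into `1/s_i + ∑_{i<l<m} (χ ∑_{j≥l} γ_{ij} - γ_{il}) / s_l`, which is
at least `1/s_i` by the condition on `γ`. As the level never decreases and jumps from `i` to `j`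
with probability at least `s_i γ_{ij}`, this gives `E[H(L_t)] - E[H(L_{t+1})] ≥ P[L_t ≠ m]`, and
summing over `t` bounds `E[T] ≤ ∑_t P[L_t ≠ m]` by `E[H(L_0)]`.
-/

open Finset

noncomputable def refinedPotential (m : ℕ) (s : ℕ → ℝ) (χ : ℝ) (i : ℕ) : ℝ :=
  if i < m then 1 / s i + χ * ∑ l ∈ Ico (i + 1) m, 1 / s l else 0

lemma Finset.sum_Icc_mul_sum_Ico {R : Type*} [CommSemiring R] (a b : ℕ) (f g : ℕ → R) :
    ∑ j ∈ Icc a b, g j * ∑ l ∈ Ico a j, f l = ∑ l ∈ Ico a b, (∑ j ∈ Icc (l + 1) b, g j) * f l := by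
  simp_rw [mul_sum, sum_mul]
  exact sum_comm' fun j l ↦ by simp only [mem_Icc, mem_Ico]; omega

lemma Finset.sum_Icc_ite_lt {M : Type*} [AddCommMonoid M] (a b : ℕ) (f : ℕ → M) :
    ∑ j ∈ Icc a b, (if j < b then f j else 0) = ∑ j ∈ Ico a b, f j := by
  rw [← sum_filter]
  congr 1
  ext j
  simp only [mem_filter, mem_Icc, mem_Ico]
  omega

section refinedPotential

variable {m i j : ℕ} {s : ℕ → ℝ} {χ : ℝ}

lemma refinedPotential_of_le (h : m ≤ i) : refinedPotential m s χ i = 0 := if_neg h.not_gt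

lemma refinedPotential_nonneg (hs : ∀ i, 1 ≤ i → i < m → 0 < s i) (hχ0 : 0 ≤ χ) (hi : 1 ≤ i) :
    0 ≤ refinedPotential m s χ i := by
  unfold refinedPotential
  split_ifs with him
  · have hsum : 0 ≤ ∑ l ∈ Ico (i + 1) m, 1 / s l :=
      sum_nonneg fun l hl ↦ (one_div_pos.2 (hs l (by grind) (mem_Ico.1 hl).2)).le
    have := hs i hi him
    positivity
  · rfl

lemma refinedPotential_succ_le (hs : ∀ i, 1 ≤ i → i < m → 0 < s i) (hχ0 : 0 ≤ χ)
    (hsmono : ∀ i, 1 ≤ i → i ≤ m - 2 → (1 - χ) * s i ≤ s (i + 1)) (hi : 1 ≤ i) :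
    refinedPotential m s χ (i + 1) ≤ refinedPotential m s χ i := by
  rcases lt_or_ge (i + 1) m with hlt | hge
  · have hsi := hs i hi (by omega)
    have hsi1 := hs (i + 1) (by omega) hlt
    have hratio : (1 - χ) / s (i + 1) ≤ 1 / s i := by
      rw [div_le_div_iff₀ hsi1 hsi]
      linarith [hsmono i hi (by omega)]
    unfold refinedPotential
    rw [if_pos hlt, if_pos (by omega), sum_eq_sum_Ico_succ_bot hlt]
    linarith [show (1 - χ) / s (i + 1) = 1 / s (i + 1) - χ * (1 / s (i + 1)) by ring]
  · rw [refinedPotential_of_le hge]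
    exact refinedPotential_nonneg hs hχ0 hi

lemma refinedPotential_antitoneOn (hs : ∀ i, 1 ≤ i → i < m → 0 < s i) (hχ0 : 0 ≤ χ)
    (hsmono : ∀ i, 1 ≤ i → i ≤ m - 2 → (1 - χ) * s i ≤ s (i + 1)) :
    AntitoneOn (refinedPotential m s χ) {i | 1 ≤ i} :=
  antitoneOn_nat_Ici_of_succ_le fun _ hi ↦ refinedPotential_succ_le hs hχ0 hsmono hi

lemma refinedPotential_sub_refinedPotential (hij : i < j) (hjm : j ≤ m) :
    refinedPotential m s χ i - refinedPotential m s χ j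
      = 1 / s i + χ * ∑ l ∈ Ico (i + 1) j, 1 / s l
          - if j < m then (1 - χ) * (1 / s j) else 0 := by
  have hsplit := sum_Ico_consecutive (fun l ↦ 1 / s l) (Nat.succ_le_of_lt hij) hjm
  unfold refinedPotential
  rw [if_pos (hij.trans_le hjm), ← hsplit]
  split_ifs with hj
  · rw [sum_eq_sum_Ico_succ_bot hj]
    ring
  · rw [show j = m by omega, Ico_self, sum_empty]
    ring

lemma sum_mul_refinedPotential_sub_eq {γ : ℕ → ℝ} (hγsum : ∑ j ∈ Icc (i + 1) m, γ j = 1) :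
    ∑ j ∈ Icc (i + 1) m, γ j * (refinedPotential m s χ i - refinedPotential m s χ j)
      = 1 / s i + ∑ l ∈ Ico (i + 1) m, (χ * ∑ j ∈ Icc l m, γ j - γ l) * (1 / s l) := by
  have htail : ∀ l ∈ Ico (i + 1) m, ∑ j ∈ Icc l m, γ j = γ l + ∑ j ∈ Icc (l + 1) m, γ j :=
    fun l hl ↦ by rw [Icc_add_one_left_eq_Ioc, add_sum_Ioc_eq_sum_Icc (mem_Ico.1 hl).2.le]
  calc _ = ∑ j ∈ Icc (i + 1) m, γ j * (1 / s i)
          + χ * ∑ j ∈ Icc (i + 1) m, γ j * ∑ l ∈ Ico (i + 1) j, 1 / s l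
          - ∑ j ∈ Icc (i + 1) m, (if j < m then γ j * ((1 - χ) * (1 / s j)) else 0) := by
        rw [mul_sum, ← sum_add_distrib, ← sum_sub_distrib]
        refine sum_congr rfl fun j hj ↦ ?_
        rw [mem_Icc] at hj
        rw [refinedPotential_sub_refinedPotential (by omega) hj.2]
        split_ifs <;> ring
    _ = 1 / s i + ∑ l ∈ Ico (i + 1) m,
          (χ * ∑ j ∈ Icc (l + 1) m, γ j - (1 - χ) * γ l) * (1 / s l) := by
        rw [← sum_mul, hγsum, sum_Icc_mul_sum_Ico, sum_Icc_ite_lt, mul_sum, one_mul,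
          add_sub_assoc, ← sum_sub_distrib]
        congr 1
        exact sum_congr rfl fun l _ ↦ by ring
    _ = _ := by
        congr 1
        exact sum_congr rfl fun l hl ↦ by rw [htail l hl]; ring

lemma one_le_mul_sum_mul_sub_refinedPotential {γ : ℕ → ℕ → ℝ}
    (hs : ∀ i, 1 ≤ i → i < m → 0 < s i)
    (hγsum : ∀ i, 1 ≤ i → i < m → ∑ j ∈ Icc (i + 1) m, γ i j = 1)
    (hγχ : ∀ i j, 1 ≤ i → i < j → j < m → γ i j ≤ χ * ∑ l ∈ Icc j m, γ i l)
    (hi : 1 ≤ i) (him : i < m) :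
    1 ≤ s i * ∑ j ∈ Icc (i + 1) m,
      γ i j * (refinedPotential m s χ i - refinedPotential m s χ j) := by
  have hsi := hs i hi him
  have hterms : 0 ≤ ∑ l ∈ Ico (i + 1) m, (χ * ∑ j ∈ Icc l m, γ i j - γ i l) * (1 / s l) := by
    refine sum_nonneg fun l hl ↦ ?_
    rw [mem_Ico] at hl
    have := hs l (by omega) hl.2
    have := hγχ i l hi (by omega) hl.2
    exact mul_nonneg (by linarith) (by positivity)
  calc (1 : ℝ) = s i * (1 / s i) := by field_simp
    _ ≤ _ := by rw [sum_mul_refinedPotential_sub_eq (hγsum i hi him)]; gcongr; linarith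

end refinedPotential

lemma mul_measureReal_le_measureReal_inter_of_condExp {Ω : Type*} {m m0 : MeasurableSpace Ω}
    {μ : Measure Ω} [IsFiniteMeasure μ] (hm : m ≤ m0) {A B : Set Ω} (hA : MeasurableSet[m] A)
    (hB : MeasurableSet B) {c : ℝ}
    (hc : ∀ᵐ ω ∂μ, ω ∈ A → c ≤ μ[B.indicator (fun _ ↦ (1 : ℝ))|m] ω) :
    c * μ.real A ≤ μ.real (A ∩ B) := by
  have hA' : MeasurableSet A := hm A hA
  calc c * μ.real A = ∫ _ in A, c ∂μ := by rw [setIntegral_const, smul_eq_mul, mul_comm]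
    _ ≤ ∫ ω in A, μ[B.indicator (fun _ ↦ (1 : ℝ))|m] ω ∂μ :=
        setIntegral_mono_ae_restrict integrableOn_const integrable_condExp.integrableOn
          ((ae_restrict_iff' hA').2 hc)
    _ = ∫ ω in A, B.indicator (fun _ ↦ (1 : ℝ)) ω ∂μ :=
        setIntegral_condExp hm ((integrable_const 1).indicator hB) hA
    _ = μ.real (A ∩ B) := by
        rw [setIntegral_indicator hB, setIntegral_const, smul_eq_mul, mul_one]

section LevelProcess

variable {Ω : Type*} {m0 : MeasurableSpace Ω}

lemma integral_comp_eq_sum_of_mem {α : Type*} [MeasurableSpace α] [MeasurableSingletonClass α]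
    (μ : Measure Ω) [IsFiniteMeasure μ] {X : Ω → α} (hX : Measurable X) {S : Finset α}
    (hS : ∀ ω, X ω ∈ S) (f : α → ℝ) :
    ∫ ω, f (X ω) ∂μ = ∑ x ∈ S, μ.real (X ⁻¹' {x}) * f x := by
  classical
  have hfib : ∀ x, MeasurableSet (X ⁻¹' {x}) := fun x ↦ hX (measurableSet_singleton x)
  have hpt : (fun ω ↦ f (X ω)) = fun ω ↦ ∑ x ∈ S, (X ⁻¹' {x}).indicator (fun _ ↦ f x) ω := by
    funext ω
    simp only [Set.indicator_apply, Set.mem_preimage, Set.mem_singleton_iff]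
    rw [sum_ite_eq, if_pos (hS ω)]
  rw [hpt, integral_finsetSum _ fun x _ ↦ (integrable_const _).indicator (hfib x)]
  simp_rw [integral_indicator_const _ (hfib _), smul_eq_mul]

lemma mul_indicator_compl_le_sum_mul_sub {m i : ℕ} {H c q : ℕ → ℝ} {p : ℝ}
    (hanti : AntitoneOn H {i | 1 ≤ i})
    (hdrop : i < m → 1 ≤ ∑ j ∈ Icc (i + 1) m, c j * (H i - H j)) (hi : i ∈ Icc 1 m)
    (hp : 0 ≤ p) (hback : ∀ j < i, q j = 0) (hforward : ∀ j ∈ Icc (i + 1) m, c j * p ≤ q j) :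
    p * ({m}ᶜ : Set ℕ).indicator 1 i ≤ ∑ j ∈ Icc 1 m, q j * (H i - H j) := by
  rw [mem_Icc] at hi
  have hHdiff_nonneg : ∀ j ∈ Icc (i + 1) m, 0 ≤ H i - H j := fun j hj ↦
    sub_nonneg.2 (hanti hi.1 (show 1 ≤ j by grind) (by grind))
  have hupper : ∑ j ∈ Icc (i + 1) m, q j * (H i - H j) = ∑ j ∈ Icc 1 m, q j * (H i - H j) := by
    refine sum_subset (Icc_subset_Icc_left (by omega)) fun j hj hj' ↦ ?_
    simp only [mem_Icc] at hj hj'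
    rcases (show j < i ∨ j = i by omega) with hji | rfl
    · rw [hback j hji, zero_mul]
    · rw [sub_self, mul_zero]
  rw [← hupper]
  rcases hi.2.lt_or_eq with him | rfl
  · rw [Set.indicator_of_mem (by simpa using him.ne), Pi.one_apply]
    calc p * 1 ≤ p * ∑ j ∈ Icc (i + 1) m, c j * (H i - H j) := by gcongr; exact hdrop him
      _ = ∑ j ∈ Icc (i + 1) m, (c j * p) * (H i - H j) := by
          rw [mul_sum]; exact sum_congr rfl fun j _ ↦ by ring
      _ ≤ _ := sum_le_sum fun j hj ↦ by gcongr; exacts [hHdiff_nonneg j hj, hforward j hj]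
  · simp

lemma measureReal_ne_add_integral_succ_le (μ : Measure Ω) [IsFiniteMeasure μ]
    (ℱ : Filtration ℕ m0) {m : ℕ} {L : ℕ → Ω → ℕ}
    (hmeas : ∀ t, Measurable[ℱ t] (L t)) (hrange : ∀ t ω, L t ω ∈ Icc 1 m)
    (hmono : ∀ᵐ ω ∂μ, ∀ t : ℕ, L t ω ≤ L (t + 1) ω) {H : ℕ → ℝ} {c : ℕ → ℕ → ℝ}
    (hanti : AntitoneOn H {i | 1 ≤ i})
    (hdrop : ∀ i, 1 ≤ i → i < m → 1 ≤ ∑ j ∈ Icc (i + 1) m, c i j * (H i - H j))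
    (htrans : ∀ t : ℕ, ∀ i j, 1 ≤ i → i < j → j ≤ m → ∀ᵐ ω ∂μ, L t ω = i →
      c i j ≤ (μ[{ω' | L (t + 1) ω' = j}.indicator (fun _ ↦ (1 : ℝ))|ℱ t]) ω) (t : ℕ) :
    μ.real {ω | L t ω ≠ m} + ∫ ω, H (L (t + 1) ω) ∂μ ≤ ∫ ω, H (L t ω) ∂μ := by
  have hL : ∀ t, Measurable (L t) := fun t ↦ (hmeas t).mono (ℱ.le t) le_rfl
  set Q : ℕ → ℕ → ℝ := fun i j ↦ μ.real (L t ⁻¹' {i} ∩ L (t + 1) ⁻¹' {j}) with hQ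
  have hjoint : ∀ g : ℕ → ℕ → ℝ, ∫ ω, g (L t ω) (L (t + 1) ω) ∂μ
      = ∑ i ∈ Icc 1 m, ∑ j ∈ Icc 1 m, Q i j * g i j := by
    intro g
    rw [integral_comp_eq_sum_of_mem μ ((hL t).prodMk (hL (t + 1)))
      (fun ω ↦ mem_product.2 ⟨hrange t ω, hrange (t + 1) ω⟩) (fun x ↦ g x.1 x.2), sum_product]
    simp only [← Set.singleton_prod_singleton, Set.mk_preimage_prod, hQ]
  have hnotdone : μ.real {ω | L t ω ≠ m}
      = ∑ i ∈ Icc 1 m, μ.real (L t ⁻¹' {i}) * ({m}ᶜ : Set ℕ).indicator 1 i := by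
    rw [← integral_comp_eq_sum_of_mem μ (hL t) (hrange t)]
    exact (integral_indicator_one ((hL t) (measurableSet_singleton m).compl)).symm
  have hback : ∀ i j, j < i → Q i j = 0 := by
    intro i j hji
    have hnull : μ {ω | ¬∀ t, L t ω ≤ L (t + 1) ω} = 0 := ae_iff.1 hmono
    refine measureReal_mono_null ?_ (by rw [measureReal_def, hnull, ENNReal.toReal_zero])
    rintro ω ⟨hi, hj⟩ hall
    have := hall t
    simp only [Set.mem_preimage, Set.mem_singleton_iff] at hi hj
    omega
  have hrow : ∀ i ∈ Icc 1 m, μ.real (L t ⁻¹' {i}) * ({m}ᶜ : Set ℕ).indicator 1 i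
      ≤ ∑ j ∈ Icc 1 m, Q i j * (H i - H j) := fun i hi ↦
    mul_indicator_compl_le_sum_mul_sub hanti (hdrop i (mem_Icc.1 hi).1) hi measureReal_nonneg
      (hback i) fun j hj ↦ mul_measureReal_le_measureReal_inter_of_condExp (ℱ.le t)
        (hmeas t (measurableSet_singleton i)) (hL (t + 1) (measurableSet_singleton j))
        (htrans t i j (mem_Icc.1 hi).1 (by grind) (mem_Icc.1 hj).2)
  have hdiff := sum_le_sum hrow
  simp_rw [mul_sub, sum_sub_distrib] at hdiff
  rw [hnotdone, hjoint fun i _ ↦ H i, hjoint fun _ j ↦ H j]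
  linarith

lemma integral_refinedPotential_eq (μ : Measure Ω) [IsFiniteMeasure μ] {m : ℕ} {s : ℕ → ℝ}
    {χ : ℝ} {X : Ω → ℕ} (hX : Measurable X) (hrange : ∀ ω, X ω ∈ Icc 1 m) :
    ∫ ω, refinedPotential m s χ (X ω) ∂μ = ∑ i ∈ Icc 1 (m - 1),
      (μ {ω | X ω = i}).toReal * (1 / s i + χ * ∑ j ∈ Icc (i + 1) (m - 1), 1 / s j) := by
  rw [integral_comp_eq_sum_of_mem μ hX hrange, ← sum_subset (Icc_subset_Icc_right (m.sub_le 1))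
    fun i hi hi' ↦ by
      rw [refinedPotential_of_le (by simp only [mem_Icc] at hi hi'; omega), mul_zero]]
  refine sum_congr rfl fun i hi ↦ ?_
  rw [mem_Icc] at hi
  have hIcc : Icc (i + 1) (m - 1) = Ico (i + 1) m := by ext; simp only [mem_Icc, mem_Ico]; omega
  rw [refinedPotential, if_pos (by omega), hIcc]
  rfl

lemma levelHitTime_le_tsum_indicator (L : ℕ → Ω → ℕ) (m : ℕ) (ω : Ω) :
    levelHitTime L m ω ≤ ∑' t, {ω | L t ω ≠ m}.indicator 1 ω := by
  classical
  by_cases hhit : ∃ t, L t ω = m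
  · calc levelHitTime L m ω ≤ (Nat.find hhit : ENNReal) :=
          sInf_le ⟨Nat.find hhit, rfl, Nat.find_spec hhit⟩
      _ = ∑ t ∈ range (Nat.find hhit), {ω | L t ω ≠ m}.indicator 1 ω := by
          rw [sum_congr rfl fun t ht ↦
            Set.indicator_of_mem (Nat.find_min hhit (mem_range.1 ht)) (1 : Ω → ENNReal)]
          simp
      _ ≤ _ := ENNReal.sum_le_tsum _
  · push Not at hhit
    simp [hhit]

lemma lintegral_levelHitTime_le_tsum (μ : Measure Ω) {L : ℕ → Ω → ℕ} {m : ℕ}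
    (hL : ∀ t, Measurable (L t)) :
    ∫⁻ ω, levelHitTime L m ω ∂μ ≤ ∑' t, μ {ω | L t ω ≠ m} := by
  have hne : ∀ t, MeasurableSet {ω | L t ω ≠ m} := fun t ↦
    (hL t (measurableSet_singleton m)).compl
  calc ∫⁻ ω, levelHitTime L m ω ∂μ ≤ ∫⁻ ω, ∑' t, {ω | L t ω ≠ m}.indicator 1 ω ∂μ :=
        lintegral_mono (levelHitTime_le_tsum_indicator L m)
    _ = ∑' t, μ {ω | L t ω ≠ m} := by
        rw [lintegral_tsum (f := fun t ↦ {ω | L t ω ≠ m}.indicator 1)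
          fun t ↦ (measurable_const.indicator (hne t)).aemeasurable]
        simp_rw [lintegral_indicator_one (hne _)]

lemma lintegral_levelHitTime_le_of_drift (μ : Measure Ω) [IsFiniteMeasure μ]
    {L : ℕ → Ω → ℕ} {m : ℕ} (hL : ∀ t, Measurable (L t)) {H : ℕ → ℝ}
    (hH : ∀ t ω, 0 ≤ H (L t ω))
    (hdrift : ∀ t, μ.real {ω | L t ω ≠ m} + ∫ ω, H (L (t + 1) ω) ∂μ ≤ ∫ ω, H (L t ω) ∂μ) :
    ∫⁻ ω, levelHitTime L m ω ∂μ ≤ ENNReal.ofReal (∫ ω, H (L 0 ω) ∂μ) := by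
  refine (lintegral_levelHitTime_le_tsum μ hL).trans ?_
  rw [ENNReal.tsum_eq_iSup_nat]
  refine iSup_le fun N ↦ ?_
  have htelescope : ∑ t ∈ range N, μ.real {ω | L t ω ≠ m}
      ≤ ∫ ω, H (L 0 ω) ∂μ - ∫ ω, H (L N ω) ∂μ := by
    rw [← sum_range_sub' (fun t ↦ ∫ ω, H (L t ω) ∂μ)]
    exact sum_le_sum fun t _ ↦ by linarith [hdrift t]
  have hreal : ∀ t, μ {ω | L t ω ≠ m} = ENNReal.ofReal (μ.real {ω | L t ω ≠ m}) :=
    fun t ↦ (ofReal_measureReal).symm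
  simp_rw [hreal, ← ENNReal.ofReal_sum_of_nonneg fun _ _ ↦ measureReal_nonneg]
  have hfinal : 0 ≤ ∫ ω, H (L N ω) ∂μ := integral_nonneg fun ω ↦ hH N ω
  exact ENNReal.ofReal_le_ofReal (by linarith)

end LevelProcess

theorem fitness_levels_upper_refined_general
    {Ω : Type*} {m0 : MeasurableSpace Ω} (μ : Measure Ω) [IsProbabilityMeasure μ]
    (ℱ : Filtration ℕ m0) (m : ℕ)
    (L : ℕ → Ω → ℕ) (hmeas : ∀ t, Measurable[ℱ t] (L t))
    (hrange : ∀ t ω, L t ω ∈ Finset.Icc 1 m)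
    (hmono : ∀ᵐ ω ∂μ, ∀ t : ℕ, L t ω ≤ L (t + 1) ω)
    (s : ℕ → ℝ) (hs : ∀ i, 1 ≤ i → i < m → 0 < s i)
    (γ : ℕ → ℕ → ℝ)
    (hγsum : ∀ i, 1 ≤ i → i < m → ∑ j ∈ Finset.Icc (i + 1) m, γ i j = 1)
    (χ : ℝ) (hχ0 : 0 ≤ χ)
    (hγχ : ∀ i j, 1 ≤ i → i < j → j < m →
      γ i j ≤ χ * ∑ l ∈ Finset.Icc j m, γ i l)
    (hsmono : ∀ i, 1 ≤ i → i ≤ m - 2 → (1 - χ) * s i ≤ s (i + 1))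
    (htrans : ∀ t : ℕ, ∀ i j, 1 ≤ i → i < j → j ≤ m → ∀ᵐ ω ∂μ, L t ω = i →
      s i * γ i j ≤ (μ[Set.indicator {ω' | L (t + 1) ω' = j} (fun _ => (1 : ℝ))|ℱ t]) ω) :
    ∫⁻ ω, levelHitTime L m ω ∂μ
      ≤ ENNReal.ofReal (∑ i ∈ Finset.Icc 1 (m - 1),
          (μ {ω | L 0 ω = i}).toReal *
            (1 / s i + χ * ∑ j ∈ Finset.Icc (i + 1) (m - 1), 1 / s j)) := by
  have hL : ∀ t, Measurable (L t) := fun t ↦ (hmeas t).mono (ℱ.le t) le_rfl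
  have hdrift := measureReal_ne_add_integral_succ_le μ ℱ hmeas hrange hmono
    (refinedPotential_antitoneOn hs hχ0 hsmono) (c := fun i j ↦ s i * γ i j)
    (fun i hi him ↦ by
      simpa only [mul_sum, mul_assoc] using
        one_le_mul_sum_mul_sub_refinedPotential hs hγsum hγχ hi him)
    htrans
  calc ∫⁻ ω, levelHitTime L m ω ∂μ
      ≤ ENNReal.ofReal (∫ ω, refinedPotential m s χ (L 0 ω) ∂μ) :=
        lintegral_levelHitTime_le_of_drift μ hL
          (fun t ω ↦ refinedPotential_nonneg hs hχ0 (mem_Icc.1 (hrange t ω)).1) hdrift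
    _ = _ := by rw [integral_refinedPotential_eq μ (hL 0) (hrange 0)]

/-- Refined fitness level method for upper bounds (Sudholt), fixed-target form: for a
nondecreasing adapted level process `L` on `{1,…,m}` with `T = inf{t : L_t = m}`,
probabilities `γ_{i,j} ≥ 0` summing to `1` over `j ∈ {i+1,…,m}`, a constant `χ ∈ [0,1]` with
`γ_{i,j} ≤ χ·∑_{l=j}^m γ_{i,l}` for `j < m` and `(1−χ)·s_i ≤ s_{i+1}`, and, on the event
`{L_t = i}`, conditional transition probabilities `P[L_{t+1} = j | F_t] ≥ s_i·γ_{i,j}`,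
one has `E[T] ≤ ∑_{i=1}^{m−1} P[L_0 = i]·(1/s_i + χ·∑_{j=i+1}^{m−1} 1/s_j)`. -/
theorem fitness_levels_upper_refined
    {Ω : Type*} {m0 : MeasurableSpace Ω} (μ : Measure Ω) [IsProbabilityMeasure μ]
    (ℱ : Filtration ℕ m0) (m : ℕ) (hm : 1 ≤ m)
    (L : ℕ → Ω → ℕ) (hmeas : ∀ t, Measurable[ℱ t] (L t))
    (hrange : ∀ t ω, L t ω ∈ Finset.Icc 1 m)
    (hmono : ∀ᵐ ω ∂μ, ∀ t : ℕ, L t ω ≤ L (t + 1) ω)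
    (s : ℕ → ℝ) (hs : ∀ i, 1 ≤ i → i < m → 0 < s i)
    (γ : ℕ → ℕ → ℝ)
    (hγnonneg : ∀ i j, 1 ≤ i → i < j → j ≤ m → 0 ≤ γ i j)
    (hγsum : ∀ i, 1 ≤ i → i < m → ∑ j ∈ Finset.Icc (i + 1) m, γ i j = 1)
    (χ : ℝ) (hχ0 : 0 ≤ χ) (hχ1 : χ ≤ 1)
    (hγχ : ∀ i j, 1 ≤ i → i < j → j < m →
      γ i j ≤ χ * ∑ l ∈ Finset.Icc j m, γ i l)
    (hsmono : ∀ i, 1 ≤ i → i ≤ m - 2 → (1 - χ) * s i ≤ s (i + 1))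
    (htrans : ∀ t : ℕ, ∀ i j, 1 ≤ i → i < j → j ≤ m → ∀ᵐ ω ∂μ, L t ω = i →
      s i * γ i j ≤ (μ[Set.indicator {ω' | L (t + 1) ω' = j} (fun _ => (1 : ℝ))|ℱ t]) ω) :
    ∫⁻ ω, levelHitTime L m ω ∂μ
      ≤ ENNReal.ofReal (∑ i ∈ Finset.Icc 1 (m - 1),
          (μ {ω | L 0 ω = i}).toReal *
            (1 / s i + χ * ∑ j ∈ Finset.Icc (i + 1) (m - 1), 1 / s j)) :=
  fitness_levels_upper_refined_general μ ℱ m L hmeas hrange hmono s hs γ hγsum χ hχ0 hγχ hsmono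
    htrans
end

section
/- Consider the (1+1) EA with mutation probability p ∈ (0,1) on the LeadingOnes function on {0,1}^n with uniformly random initialization. For every t ≥ 0 and all integers i, j with 0 ≤ i < j ≤ n, the conditional probability that LO(x_{t+1}) = j, given that LO(x_t) = i and that LO(x_{t+1}) > i, equals 2^{i−j} if j < n and equals 2^{i−j+1} if j = n. -/
open MeasureTheory Finset

/-- The LeadingOnes fitness: the number of leading one-bits of `x`. -/
def leadingOnes (n : ℕ) (x : Fin n → Bool) : ℕ :=
  (Finset.univ.filter (fun i : Fin n => ∀ j ≤ i, x j = true)).card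

/-- Standard bit mutation: the probability that flipping each bit of `x` independently with
probability `p` produces `y`. -/
noncomputable def sbmProb (n : ℕ) (p : ℝ) (x y : Fin n → Bool) : ℝ :=
  p ^ hammingDist x y * (1 - p) ^ (n - hammingDist x y)

/-- Transition probability of an elitist (1+1) algorithm with fitness `f` (to be maximized)
and mutation distribution `q`: from `a`, the offspring `y ~ q a ·` is accepted iff
`f y ≥ f a`; otherwise the algorithm stays at `a`. -/
noncomputable def eaKernel (n : ℕ) (f : (Fin n → Bool) → ℕ)
    (q : (Fin n → Bool) → (Fin n → Bool) → ℝ) (a b : Fin n → Bool) : ℝ :=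
  (if f a ≤ f b then q a b else 0) +
    (if b = a then ∑ y ∈ Finset.univ.filter (fun y => f y < f a), q a y else 0)

/-- `x` is a time-homogeneous Markov chain on the finite state space `S` with initial
distribution `init` and transition probabilities `K`, characterized via its
finite-dimensional distributions. -/
def IsMarkovProcess {Ω S : Type*} [MeasurableSpace Ω] [MeasurableSpace S] [Fintype S]
    (μ : Measure Ω) (x : ℕ → Ω → S) (init : S → ℝ) (K : S → S → ℝ) : Prop :=
  (∀ t, Measurable (x t)) ∧
  (∀ a : S, μ {ω | x 0 ω = a} = ENNReal.ofReal (init a)) ∧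
  (∀ t : ℕ, ∀ a : ℕ → S,
    μ {ω | ∀ s ≤ t + 1, x s ω = a s}
      = μ {ω | ∀ s ≤ t, x s ω = a s} * ENNReal.ofReal (K (a t) (a (t + 1))))

/-- First time at which the process `x` reaches a state satisfying `good`
(`⊤` if this never happens). -/
noncomputable def hitTime {Ω S : Type*} (x : ℕ → Ω → S) (good : S → Prop) (ω : Ω) : ENNReal :=
  sInf {r : ENNReal | ∃ t : ℕ, r = (t : ENNReal) ∧ good (x t ω)}

/-!
Flipping bits behind the first zero of a state commutes with the dynamics on all levels up to
that zero, so by induction on `t` the law of `x t` is uniform on every fitness level. Given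
`LO(x_t) = i`, an improvement keeps the first `i` bits and flips bit `i`; the parent's bits
behind `i` are uniform and mutate independently of this, so the offspring's bits behind `i`
are uniform as well. Hence `P(LO(x_{t+1}) ≥ j | improvement) = 2^{i+1-j}` for `i < j ≤ n`, and
the level probabilities are differences of these tails.
-/

section LeadingOnes

variable {n : ℕ}

theorem leadingOnes_le (x : Fin n → Bool) : leadingOnes n x ≤ n :=
  (card_le_univ _).trans_eq (Fintype.card_fin n)

theorem le_leadingOnes_iff {x : Fin n → Bool} {j : ℕ} (hj : j ≤ n) :
    j ≤ leadingOnes n x ↔ ∀ k : Fin n, (k : ℕ) < j → x k = true := by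
  constructor
  · intro hjx k hk
    by_contra hxk
    have hsub : univ.filter (fun i : Fin n => ∀ l ≤ i, x l = true) ⊆ Iio k := fun i hi => by
      simp only [mem_filter, mem_univ, true_and] at hi
      exact mem_Iio.2 (lt_of_not_ge fun hki => hxk (hi k hki))
    have := (card_le_card hsub).trans_eq (Fin.card_Iio k)
    exact absurd (hjx.trans this) (not_le.2 hk)
  · intro hx
    have hsub : univ.filter (fun i : Fin n => (i : ℕ) < j)
        ⊆ univ.filter (fun i : Fin n => ∀ l ≤ i, x l = true) := fun i hi => by
      simp only [mem_filter, mem_univ, true_and] at hi ⊢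
      exact fun l hl => hx l (lt_of_le_of_lt hl hi)
    have := card_le_card hsub
    rwa [Fin.card_filter_val_lt, min_eq_right hj] at this

theorem leadingOnes_eq_iff {x : Fin n → Bool} {j : ℕ} (hj : j ≤ n) :
    leadingOnes n x = j ↔
      ∀ k : Fin n, ((k : ℕ) < j → x k = true) ∧ ((k : ℕ) = j → x k = false) := by
  constructor
  · rintro rfl k
    refine ⟨(le_leadingOnes_iff hj).1 le_rfl k, fun hk => ?_⟩
    by_contra hxk
    have : leadingOnes n x + 1 ≤ leadingOnes n x :=
      (le_leadingOnes_iff (hk ▸ k.isLt)).2 fun l hl => by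
        rcases Nat.lt_succ_iff_lt_or_eq.1 hl with hl | hl
        · exact (le_leadingOnes_iff hj).1 le_rfl l hl
        · simpa [Fin.ext (hl.trans hk.symm)] using hxk
    omega
  · intro hx
    refine le_antisymm ?_ ((le_leadingOnes_iff hj).2 fun k hk => (hx k).1 hk)
    rcases hj.lt_or_eq with hjn | rfl
    · by_contra! hlt
      have := (le_leadingOnes_iff hjn).1 hlt ⟨j, hjn⟩ (Nat.lt_succ_self j)
      simp [(hx ⟨j, hjn⟩).2 rfl] at this
    · exact leadingOnes_le x

theorem exists_leadingOnes_eq {j : ℕ} (hj : j ≤ n) : ∃ x : Fin n → Bool, leadingOnes n x = j :=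
  ⟨fun k => decide ((k : ℕ) < j), (leadingOnes_eq_iff hj).2 fun k => by
    refine ⟨fun hk => by simpa using hk, fun hk => by simp [hk]⟩⟩

theorem min_leadingOnes_eq_of_forall_le {x y : Fin n → Bool} {j : ℕ}
    (h : ∀ k : Fin n, (k : ℕ) ≤ j → x k = y k) :
    min (leadingOnes n x) (j + 1) = min (leadingOnes n y) (j + 1) := by
  have key : ∀ r ≤ j + 1, r ≤ n → (r ≤ leadingOnes n x ↔ r ≤ leadingOnes n y) := by
    intro r hrj hrn
    rw [le_leadingOnes_iff hrn, le_leadingOnes_iff hrn]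
    exact forall_congr' fun k => imp_congr_right fun hk => by rw [h k (by omega)]
  have hx := leadingOnes_le x
  have hy := leadingOnes_le y
  have h1 := key (min (leadingOnes n x) (j + 1)) (min_le_right _ _) (by omega)
  have h2 := key (min (leadingOnes n y) (j + 1)) (min_le_right _ _) (by omega)
  omega

end LeadingOnes

section Mutation

variable {n : ℕ} {p : ℝ}

theorem sbmProb_nonneg (hp0 : 0 ≤ p) (hp1 : p ≤ 1) (x y : Fin n → Bool) : 0 ≤ sbmProb n p x y :=
  mul_nonneg (pow_nonneg hp0 _) (pow_nonneg (sub_nonneg.2 hp1) _)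

theorem sbmProb_self (x : Fin n → Bool) : sbmProb n p x x = (1 - p) ^ n := by
  simp [sbmProb]

theorem sbmProb_eq_prod (x y : Fin n → Bool) :
    sbmProb n p x y = ∏ k, if x k = y k then 1 - p else p := by
  have hagree : #{k | x k = y k} = n - hammingDist x y := by
    have := card_filter_add_card_filter_not (s := univ) (fun k : Fin n => x k = y k)
    rw [card_univ, Fintype.card_fin] at this
    have hdist : hammingDist x y = #{k | ¬x k = y k} := rfl
    omega
  rw [prod_ite, prod_const, prod_const, hagree, sbmProb, mul_comm]
  rfl

def maskFlip (m : Fin n → Bool) : Equiv.Perm (Fin n → Bool) :=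
  Function.Involutive.toPerm (fun y k => y k ^^ m k) fun y => by funext k; simp

@[simp]
theorem maskFlip_apply (m y : Fin n → Bool) (k : Fin n) : maskFlip m y k = (y k ^^ m k) := rfl

theorem sbmProb_maskFlip (m x y : Fin n → Bool) :
    sbmProb n p (maskFlip m x) (maskFlip m y) = sbmProb n p x y := by
  simp only [sbmProb_eq_prod, maskFlip_apply, Bool.xor_left_inj]

theorem min_leadingOnes_maskFlip {m : Fin n → Bool} {j : ℕ}
    (hm : ∀ k : Fin n, (k : ℕ) ≤ j → m k = false) (y : Fin n → Bool) :
    min (leadingOnes n (maskFlip m y)) (j + 1) = min (leadingOnes n y) (j + 1) :=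
  min_leadingOnes_eq_of_forall_le fun k hk => by simp [hm k hk]

end Mutation

section EAKernel

variable {n : ℕ} {f : (Fin n → Bool) → ℕ} {q : (Fin n → Bool) → (Fin n → Bool) → ℝ}

theorem eaKernel_of_lt {a b : Fin n → Bool} (h : f a < f b) : eaKernel n f q a b = q a b := by
  rw [eaKernel, if_pos h.le, if_neg (by rintro rfl; exact lt_irrefl _ h), add_zero]

theorem eaKernel_of_gt {a b : Fin n → Bool} (h : f b < f a) : eaKernel n f q a b = 0 := by
  rw [eaKernel, if_neg (not_le.2 h), if_neg (by rintro rfl; exact lt_irrefl _ h), add_zero]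

theorem le_eaKernel_self (hq : ∀ a b, 0 ≤ q a b) (a : Fin n → Bool) : q a a ≤ eaKernel n f q a a := by
  rw [eaKernel, if_pos le_rfl, if_pos rfl]
  exact le_add_of_nonneg_right (sum_nonneg fun y _ => hq a y)

theorem eaKernel_perm (σ : Equiv.Perm (Fin n → Bool)) (hf : ∀ a, f (σ a) = f a)
    (hq : ∀ a b, q (σ a) (σ b) = q a b) (a b : Fin n → Bool) :
    eaKernel n f q (σ a) (σ b) = eaKernel n f q a b := by
  have hsum : ∑ y ∈ univ.filter (fun y => f y < f (σ a)), q (σ a) y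
      = ∑ y ∈ univ.filter (fun y => f y < f a), q a y := by
    rw [sum_filter, sum_filter, ← Equiv.sum_comp σ]
    simp only [hf, hq]
  rw [eaKernel, eaKernel, hsum]
  simp only [hf, hq, σ.injective.eq_iff]

theorem eaKernel_min_eq {a b : Fin n → Bool} (j : ℕ) (hb : f b ≤ j) :
    eaKernel n (fun y => min (f y) (j + 1)) q a b = eaKernel n f q a b := by
  unfold eaKernel
  dsimp only
  congr 1
  · exact if_congr (by omega) rfl rfl
  · by_cases hba : b = a
    · subst hba
      simp only [if_pos]
      exact sum_congr (filter_congr fun y _ => by omega) fun _ _ => rfl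
    · simp only [if_neg hba]

end EAKernel

theorem MeasureTheory.measure_eq_sum_measure_preimage_singleton_inter {Ω β : Type*}
    [MeasurableSpace Ω] [Fintype β] [MeasurableSpace β] [MeasurableSingletonClass β]
    {μ : Measure Ω} {f : Ω → β} (hf : Measurable f) (E : Set Ω) :
    μ E = ∑ b, μ (f ⁻¹' {b} ∩ E) := by
  have := sum_measure_preimage_singleton (μ := μ.restrict E) univ
    fun b _ => hf (measurableSet_singleton b)
  rw [coe_univ, Set.preimage_univ, Measure.restrict_apply_univ] at this
  rw [← this]
  exact sum_congr rfl fun b _ => Measure.restrict_apply (hf (measurableSet_singleton b))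

namespace IsMarkovProcess

variable {Ω S : Type*} [MeasurableSpace Ω] [MeasurableSpace S] [Fintype S]
  [MeasurableSingletonClass S] {μ : Measure Ω} {x : ℕ → Ω → S} {init : S → ℝ} {K : S → S → ℝ}

theorem measurableSet_setOf (h : IsMarkovProcess μ x init K) (t : ℕ) (P : S → Prop) :
    MeasurableSet {ω | P (x t ω)} :=
  h.1 t (Set.toFinite _).measurableSet

theorem measure_eq_and_eq (h : IsMarkovProcess μ x init K) (t : ℕ) (a b : S) :
    μ {ω | x t ω = a ∧ x (t + 1) ω = b} = μ {ω | x t ω = a} * ENNReal.ofReal (K a b) := by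
  obtain ⟨hx, -, hstep⟩ := h
  let history : Ω → Fin t → S := fun ω s => x s ω
  have hhistory : Measurable history := measurable_pi_lambda _ fun s => hx s
  let path (v : Fin t → S) : ℕ → S := fun s =>
    if hs : s < t then v ⟨s, hs⟩ else if s = t then a else b
  have hpath : ∀ v ω, (∀ s ≤ t, x s ω = path v s) ↔ history ω = v ∧ x t ω = a := by
    intro v ω
    simp only [path, history, funext_iff]
    refine ⟨fun hω => ⟨fun s => by simpa [s.isLt] using hω s s.isLt.le, by simpa using hω t le_rfl⟩,
      fun ⟨hv, ha⟩ s hs => ?_⟩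
    rcases hs.lt_or_eq with hs | rfl
    · simp [hs, ← hv ⟨s, hs⟩]
    · simp [ha]
  have hpath' : ∀ v ω, (∀ s ≤ t + 1, x s ω = path v s)
      ↔ history ω = v ∧ x t ω = a ∧ x (t + 1) ω = b := by
    intro v ω
    rw [← and_assoc, ← hpath]
    refine ⟨fun hω => ⟨fun s hs => hω s (by omega), by simpa [path] using hω (t + 1) le_rfl⟩,
      fun ⟨hv, hb⟩ s hs => ?_⟩
    rcases hs.lt_or_eq with hs | rfl
    · exact hv s (by omega)
    · simpa [path] using hb
  rw [measure_eq_sum_measure_preimage_singleton_inter hhistory,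
    measure_eq_sum_measure_preimage_singleton_inter hhistory {ω | x t ω = a}, sum_mul]
  refine sum_congr rfl fun v _ => ?_
  have e := hstep t (path v)
  simp only [hpath, hpath'] at e
  simp only [path, lt_irrefl, dite_false, if_true, Nat.not_succ_lt_self, Nat.succ_ne_self,
    if_false] at e
  exact e

theorem measure_setOf_transition (h : IsMarkovProcess μ x init K) (t : ℕ)
    (Q : S → S → Prop) [DecidableRel Q] :
    μ {ω | Q (x t ω) (x (t + 1) ω)}
      = ∑ c : S × S, if Q c.1 c.2 then μ {ω | x t ω = c.1} * ENNReal.ofReal (K c.1 c.2) else 0 := by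
  rw [measure_eq_sum_measure_preimage_singleton_inter ((h.1 t).prodMk (h.1 (t + 1)))]
  refine sum_congr rfl fun c _ => ?_
  split_ifs with hc
  · rw [← h.measure_eq_and_eq]
    congr 1
    ext ω
    simp only [Set.mem_inter_iff, Set.mem_preimage, Set.mem_singleton_iff, Prod.ext_iff,
      Set.mem_ofPred_eq]
    constructor
    · exact fun hω => hω.1
    · rintro ⟨h1, h2⟩
      exact ⟨⟨h1, h2⟩, h1 ▸ h2 ▸ hc⟩
  · convert measure_empty (μ := μ)
    ext ω
    simp only [Set.mem_inter_iff, Set.mem_preimage, Set.mem_singleton_iff, Set.mem_ofPred_eq,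
      Set.mem_empty_iff_false, iff_false, not_and]
    rintro rfl
    exact hc

theorem measure_succ_eq (h : IsMarkovProcess μ x init K) (t : ℕ) (b : S) :
    μ {ω | x (t + 1) ω = b} = ∑ a, μ {ω | x t ω = a} * ENNReal.ofReal (K a b) := by
  rw [measure_eq_sum_measure_preimage_singleton_inter (h.1 t)]
  exact sum_congr rfl fun a _ => h.measure_eq_and_eq t a b

theorem measure_ne_zero (h : IsMarkovProcess μ x init K) (hinit : ∀ a, 0 < init a)
    (hK : ∀ a, 0 < K a a) (t : ℕ) (a : S) : μ {ω | x t ω = a} ≠ 0 := by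
  induction t with
  | zero => rw [h.2.1]; exact (ENNReal.ofReal_pos.2 (hinit a)).ne'
  | succ t ih =>
    rw [h.measure_succ_eq, Ne, sum_eq_zero_iff, not_forall]
    exact ⟨a, fun h0 => mul_ne_zero ih (ENNReal.ofReal_pos.2 (hK a)).ne' (h0 (mem_univ a))⟩

end IsMarkovProcess

theorem Fintype.sum_ite_forall_prod {ι α R : Type*} [Fintype ι] [DecidableEq ι] [Fintype α]
    [CommSemiring R] (C : ι → α → Prop) [∀ k, DecidablePred (C k)] (w : ι → α → R) :
    ∑ z : ι → α, (if ∀ k, C k (z k) then ∏ k, w k (z k) else 0)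
      = ∏ k, ∑ v, if C k v then w k v else 0 := by
  rw [Fintype.prod_sum]
  simp only [prod_ite_zero]

section LevelSums

variable {n : ℕ} {p : ℝ}

theorem sum_sbmProb_level_tail {i j : ℕ} (hij : i < j) (hjn : j ≤ n) :
    ∑ c : (Fin n → Bool) × (Fin n → Bool),
        (if leadingOnes n c.1 = i ∧ j ≤ leadingOnes n c.2 then sbmProb n p c.1 c.2 else 0)
      = (1 - p) ^ i * p * 2 ^ (n - j) := by
  classical
  let C : Fin n → Bool × Bool → Prop := fun k uv =>
    ((k : ℕ) < i → uv.1 = true) ∧ ((k : ℕ) = i → uv.1 = false) ∧ ((k : ℕ) < j → uv.2 = true)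
  have hC : ∀ z : Fin n → Bool × Bool,
      (leadingOnes n (fun k => (z k).1) = i ∧ j ≤ leadingOnes n (fun k => (z k).2))
        ↔ ∀ k, C k (z k) := by
    intro z
    rw [leadingOnes_eq_iff (by omega), le_leadingOnes_iff hjn, ← forall_and]
    simp only [C, and_assoc]
  have hfactor : ∀ k : Fin n,
      ∑ uv : Bool × Bool, (if C k uv then (if uv.1 = uv.2 then 1 - p else p) else 0)
        = (if (k : ℕ) < i then 1 - p else 1) * (if (k : ℕ) = i then p else 1)
          * (if j ≤ (k : ℕ) then 2 else 1) := by
    intro k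
    simp only [C, Fintype.sum_prod_type, Fintype.sum_bool]
    rcases lt_trichotomy (k : ℕ) i with hk | hk | hk
    · simp [hk, hk.trans hij, hk.ne, (hk.trans hij).not_ge]
    · simp [hk, hij, hij.not_ge]
    · rcases lt_or_ge (k : ℕ) j with hkj | hkj
      · simp [hk.not_gt, hk.ne', hkj, hkj.not_ge]
      · simp [hk.not_gt, hk.ne', hkj.not_gt, hkj]
        norm_num
  rw [← (Equiv.arrowProdEquivProdArrow _ _ _).sum_comp]
  simp only [Equiv.arrowProdEquivProdArrow, Equiv.coe_fn_mk, sbmProb_eq_prod]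
  rw [sum_congr rfl fun z _ => if_congr (hC z) rfl rfl]
  convert Fintype.sum_ite_forall_prod C (fun _ uv => if uv.1 = uv.2 then 1 - p else p)
  have hbelow : #{k : Fin n | (k : ℕ) < i} = i := by
    rw [Fin.card_filter_val_lt, min_eq_right (by omega)]
  have hat : #{k : Fin n | (k : ℕ) = i} = 1 :=
    card_eq_one.2 ⟨⟨i, by omega⟩, by ext k; simp [Fin.ext_iff]⟩
  have habove : #{k : Fin n | j ≤ (k : ℕ)} = n - j := by
    have := card_filter_add_card_filter_not (s := univ) fun k : Fin n => (k : ℕ) < j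
    simp only [Fin.card_filter_val_lt, not_lt, card_univ, Fintype.card_fin] at this
    omega
  simp only [hfactor, prod_mul_distrib, prod_ite, prod_const, one_pow, mul_one, hbelow, hat,
    habove, pow_one]

end LevelSums

section LeadingOnesChain

variable {n : ℕ} {p : ℝ} {Ω : Type*} [MeasurableSpace Ω] {μ : Measure Ω}
  {x : ℕ → Ω → Fin n → Bool}

/-- The truncated fitness `min LO (j + 1)` is invariant under the flip and decides every
transition into a level `≤ j`, so the flip commutes with those transitions. -/
theorem measure_maskFlip_eq (hchain : IsMarkovProcess μ x (fun _ => 1 / 2 ^ n)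
      (eaKernel n (leadingOnes n) (sbmProb n p)))
    (t j : ℕ) {m : Fin n → Bool} (hm : ∀ k : Fin n, (k : ℕ) ≤ j → m k = false)
    (b : Fin n → Bool) (hb : leadingOnes n b ≤ j) :
    μ {ω | x t ω = maskFlip m b} = μ {ω | x t ω = b} := by
  induction t generalizing b with
  | zero => rw [hchain.2.1, hchain.2.1]
  | succ t ih =>
    have hflip := min_leadingOnes_maskFlip hm
    have hmb : leadingOnes n (maskFlip m b) ≤ j := by
      have := hflip b
      omega
    rw [hchain.measure_succ_eq, hchain.measure_succ_eq, ← Equiv.sum_comp (maskFlip m)]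
    refine sum_congr rfl fun a _ => ?_
    rw [← eaKernel_min_eq j hmb, eaKernel_perm _ hflip (sbmProb_maskFlip m), eaKernel_min_eq j hb]
    rcases le_or_gt (leadingOnes n a) j with ha | ha
    · rw [ih a ha]
    · rw [eaKernel_of_gt (by omega), ENNReal.ofReal_zero, mul_zero, mul_zero]

theorem measure_eq_of_leadingOnes_eq (hchain : IsMarkovProcess μ x (fun _ => 1 / 2 ^ n)
      (eaKernel n (leadingOnes n) (sbmProb n p)))
    (t : ℕ) {a b : Fin n → Bool} (hab : leadingOnes n a = leadingOnes n b) :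
    μ {ω | x t ω = a} = μ {ω | x t ω = b} := by
  have hflip : maskFlip (fun k => a k ^^ b k) a = b := by
    funext k
    simp
  have ha := (leadingOnes_eq_iff (leadingOnes_le a)).1 rfl
  have hb := (leadingOnes_eq_iff (leadingOnes_le a)).1 hab.symm
  rw [← hflip, measure_maskFlip_eq hchain t (leadingOnes n a) (fun k hk => ?_) a le_rfl]
  rcases hk.lt_or_eq with hk | hk
  · simp [(ha k).1 hk, (hb k).1 hk]
  · simp [(ha k).2 hk, (hb k).2 hk]

theorem measure_state_ne_zero (hp0 : 0 ≤ p) (hp1 : p < 1)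
    (hchain : IsMarkovProcess μ x (fun _ => 1 / 2 ^ n)
      (eaKernel n (leadingOnes n) (sbmProb n p)))
    (t : ℕ) (a : Fin n → Bool) : μ {ω | x t ω = a} ≠ 0 :=
  hchain.measure_ne_zero (fun _ => by positivity)
    (fun b => (pow_pos (sub_pos.2 hp1) n).trans_le <|
      (sbmProb_self b).symm.le.trans (le_eaKernel_self (sbmProb_nonneg hp0 hp1.le) b))
    t a

theorem measure_leadingOnes_eq_and_le (hp0 : 0 ≤ p) (hp1 : p ≤ 1)
    (hchain : IsMarkovProcess μ x (fun _ => 1 / 2 ^ n)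
      (eaKernel n (leadingOnes n) (sbmProb n p)))
    (t : ℕ) {i j : ℕ} (hij : i < j) (hjn : j ≤ n) {a : Fin n → Bool} (ha : leadingOnes n a = i) :
    μ {ω | leadingOnes n (x t ω) = i ∧ j ≤ leadingOnes n (x (t + 1) ω)}
      = μ {ω | x t ω = a} * ENNReal.ofReal ((1 - p) ^ i * p * 2 ^ (n - j)) := by
  classical
  rw [hchain.measure_setOf_transition t fun a b => leadingOnes n a = i ∧ j ≤ leadingOnes n b,
    ← sum_sbmProb_level_tail hij hjn, ENNReal.ofReal_sum_of_nonneg, mul_sum]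
  · refine sum_congr rfl fun c _ => ?_
    split_ifs with hc
    · rw [measure_eq_of_leadingOnes_eq hchain t (hc.1.trans ha.symm), eaKernel_of_lt (by omega)]
    · simp
  · intro c _
    split_ifs
    exacts [sbmProb_nonneg hp0 hp1 _ _, le_rfl]

open ProbabilityTheory in
theorem cond_le_leadingOnes (hp0 : 0 < p) (hp1 : p < 1) [IsFiniteMeasure μ]
    (hchain : IsMarkovProcess μ x (fun _ => 1 / 2 ^ n)
      (eaKernel n (leadingOnes n) (sbmProb n p)))
    (t : ℕ) {i j : ℕ} (hij : i < j) (hjn : j ≤ n) :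
    μ[|{ω | leadingOnes n (x t ω) = i ∧ i < leadingOnes n (x (t + 1) ω)}]
        {ω | j ≤ leadingOnes n (x (t + 1) ω)}
      = ENNReal.ofReal (2 ^ ((i : ℤ) + 1 - j)) := by
  obtain ⟨a, ha⟩ := exists_leadingOnes_eq (hij.trans_le hjn).le
  have hinter : {ω | leadingOnes n (x t ω) = i ∧ i < leadingOnes n (x (t + 1) ω)}
      ∩ {ω | j ≤ leadingOnes n (x (t + 1) ω)}
      = {ω | leadingOnes n (x t ω) = i ∧ j ≤ leadingOnes n (x (t + 1) ω)} := by
    ext ω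
    simp only [Set.mem_inter_iff, Set.mem_ofPred_eq]
    omega
  have hA : MeasurableSet {ω | leadingOnes n (x t ω) = i ∧ i < leadingOnes n (x (t + 1) ω)} :=
    (hchain.measurableSet_setOf t (leadingOnes n · = i)).inter
      (hchain.measurableSet_setOf (t + 1) (i < leadingOnes n ·))
  have hden : μ {ω | leadingOnes n (x t ω) = i ∧ i < leadingOnes n (x (t + 1) ω)}
      = μ {ω | x t ω = a} * ENNReal.ofReal ((1 - p) ^ i * p * 2 ^ (n - (i + 1))) :=
    measure_leadingOnes_eq_and_le hp0.le hp1.le hchain t (Nat.lt_succ_self i) (by omega) ha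
  have hpos := measure_state_ne_zero hp0.le hp1 hchain t a
  have hα : (0 : ℝ) < (1 - p) ^ i * p := mul_pos (pow_pos (sub_pos.2 hp1) i) hp0
  rw [cond_apply hA, hinter, hden, measure_leadingOnes_eq_and_le hp0.le hp1.le hchain t hij hjn ha,
    mul_comm, ← div_eq_mul_inv, ENNReal.mul_div_mul_left _ _ hpos (measure_ne_top _ _),
    ← ENNReal.ofReal_div_of_pos (by positivity), mul_div_mul_left _ _ hα.ne', ← zpow_natCast,
    ← zpow_natCast, ← zpow_sub₀ two_ne_zero]
  congr 2
  omega

end LeadingOnesChain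

open ProbabilityTheory in
/-- For the (1+1) EA with mutation probability `p ∈ (0,1)` on LeadingOnes with uniformly
random initialization: for every `t` and all `0 ≤ i < j ≤ n`, the conditional probability that
`LO(x_{t+1}) = j`, given `LO(x_t) = i` and `LO(x_{t+1}) > i`, equals `2^{i−j}` if `j < n`
and `2^{i−j+1}` if `j = n`. -/
theorem oneplusoneEA_leadingOnes_level_transition
    (n : ℕ) (p : ℝ) (hp0 : 0 < p) (hp1 : p < 1)
    {Ω : Type*} [MeasurableSpace Ω] (μ : Measure Ω) [IsProbabilityMeasure μ]
    (x : ℕ → Ω → Fin n → Bool)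
    (hchain : IsMarkovProcess μ x (fun _ => 1 / 2 ^ n)
      (eaKernel n (leadingOnes n) (sbmProb n p)))
    (t : ℕ) (i j : ℕ) (hij : i < j) (hjn : j ≤ n) :
    (μ[|{ω | leadingOnes n (x t ω) = i ∧ i < leadingOnes n (x (t + 1) ω)}])
        {ω | leadingOnes n (x (t + 1) ω) = j}
      = ENNReal.ofReal
          (if j < n then (2 : ℝ) ^ ((i : ℤ) - (j : ℤ))
           else (2 : ℝ) ^ ((i : ℤ) - (j : ℤ) + 1)) := by
  rcases hjn.lt_or_eq with hjn | hjn
  · have hdiff : {ω | leadingOnes n (x (t + 1) ω) = j}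
        = {ω | j ≤ leadingOnes n (x (t + 1) ω)} \ {ω | j + 1 ≤ leadingOnes n (x (t + 1) ω)} := by
      ext ω
      simp only [Set.mem_sdiff, Set.mem_ofPred_eq]
      omega
    have hsub : {ω | j + 1 ≤ leadingOnes n (x (t + 1) ω)} ⊆ {ω | j ≤ leadingOnes n (x (t + 1) ω)} :=
      fun ω => Nat.le_of_succ_le
    rw [if_pos hjn, hdiff, measure_sdiff hsub
        (hchain.measurableSet_setOf (t + 1) (j + 1 ≤ leadingOnes n ·)).nullMeasurableSet
        (measure_ne_top _ _),
      cond_le_leadingOnes hp0 hp1 hchain t hij hjn.le,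
      cond_le_leadingOnes hp0 hp1 hchain t (by omega) hjn, ← ENNReal.ofReal_sub _ (by positivity)]
    congr 1
    rw [show (i : ℤ) + 1 - ((j + 1 : ℕ) : ℤ) = i - j by push_cast; ring,
      show (i : ℤ) + 1 - j = i - j + 1 by ring, zpow_add_one₀ two_ne_zero]
    ring
  · have htop : {ω | leadingOnes n (x (t + 1) ω) = j} = {ω | j ≤ leadingOnes n (x (t + 1) ω)} := by
      ext ω
      simp only [Set.mem_ofPred_eq, hjn, (leadingOnes_le _).ge_iff_eq]
    rw [if_neg hjn.not_lt, htop, cond_le_leadingOnes hp0 hp1 hchain t hij hjn.le,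
      sub_add_eq_add_sub]
end

section
/- For every n ∈ ℕ, ∑_{i=0}^n ( C(n,i) · H_i ) / 2^n = H_n − ∑_{j=1}^n 1/(j · 2^j), where C(n,i) is the binomial coefficient. -/
/-!
Write `S_n = ∑_i C(n,i) H_i`. Pascal's rule turns `S_{n+1}` into `∑_i C(n,i) (H_i + H_{i+1})
= 2 S_n + ∑_i C(n,i)/(i+1)`, and the last sum is `(2^{n+1} - 1)/(n+1)`. Hence `S_n / 2^n`
increases by `1/(n+1) - 1/((n+1) 2^{n+1})` from `n` to `n+1`, and the identity telescopes.
-/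

/-- The `i`-th harmonic number `H_i = ∑_{l=1}^i 1/l`, with `H_0 = 0`. -/
noncomputable def harm (i : ℕ) : ℝ := ∑ j ∈ Finset.range i, 1 / ((j : ℝ) + 1)

open Finset

lemma harm_succ (i : ℕ) : harm (i + 1) = harm i + 1 / ((i : ℝ) + 1) := by
  simp [harm, sum_range_succ]

lemma sum_range_succ_choose_smul {M : Type*} [AddCommMonoid M] (f : ℕ → M) (n : ℕ) :
    ∑ i ∈ range (n + 2), (n + 1).choose i • f i
      = ∑ i ∈ range (n + 1), n.choose i • (f i + f (i + 1)) := by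
  have shifted : ∑ i ∈ range (n + 1), n.choose (i + 1) • f (i + 1) + f 0
      = ∑ i ∈ range (n + 1), n.choose i • f i := by
    rw [sum_range_succ (fun i ↦ n.choose (i + 1) • f (i + 1)), Nat.choose_succ_self, zero_smul,
      add_zero, sum_range_succ' (fun i ↦ n.choose i • f i), Nat.choose_zero_right, one_smul]
  simp only [sum_range_succ' _ (n + 1), Nat.choose_succ_succ', add_smul, sum_add_distrib,
    Nat.choose_zero_right, one_smul, smul_add]
  rw [add_assoc, shifted, add_comm]

lemma sum_choose_div_succ (n : ℕ) :
    ∑ i ∈ range (n + 1), (n.choose i : ℝ) / ((i : ℝ) + 1)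
      = (2 ^ (n + 1) - 1) / ((n : ℝ) + 1) := by
  have absorb (i : ℕ) : (n.choose i : ℝ) / ((i : ℝ) + 1)
      = ((n + 1).choose (i + 1) : ℝ) / ((n : ℝ) + 1) := by
    rw [div_eq_div_iff (by positivity) (by positivity)]
    exact_mod_cast (mul_comm _ _).trans (Nat.add_one_mul_choose_eq n i)
  have total : ∑ i ∈ range (n + 1), ((n + 1).choose (i + 1) : ℝ) = 2 ^ (n + 1) - 1 := by
    have := sum_range_succ' (fun i ↦ ((n + 1).choose i : ℝ)) (n + 1)
    rw [← Nat.cast_sum, Nat.sum_range_choose, Nat.choose_zero_right] at this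
    push_cast at this
    linarith
  simp_rw [absorb, ← sum_div, total]

lemma sum_choose_mul_harm_succ (n : ℕ) :
    ∑ i ∈ range (n + 2), ((n + 1).choose i : ℝ) * harm i
      = 2 * ∑ i ∈ range (n + 1), (n.choose i : ℝ) * harm i
        + (2 ^ (n + 1) - 1) / ((n : ℝ) + 1) := by
  simp only [← nsmul_eq_mul, sum_range_succ_choose_smul harm, harm_succ]
  rw [← sum_choose_div_succ, mul_sum, ← sum_add_distrib]
  refine sum_congr rfl fun i _ ↦ ?_
  simp only [nsmul_eq_mul]
  ring

/-- For every `n ∈ ℕ`,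
`∑_{i=0}^n (C(n,i) · H_i) / 2^n = H_n − ∑_{j=1}^n 1/(j · 2^j)`. -/
theorem weighted_harmonic_sum (n : ℕ) :
    ∑ i ∈ Finset.range (n + 1), ((n.choose i : ℝ) * harm i) / 2 ^ n
      = harm n - ∑ j ∈ Finset.Icc 1 n, 1 / ((j : ℝ) * 2 ^ j) := by
  rw [← sum_div, div_eq_iff (by positivity)]
  induction n with
  | zero => simp [harm]
  | succ n ih =>
    rw [sum_choose_mul_harm_succ, ih, harm_succ, sum_Icc_succ_top (by omega)]
    push_cast
    field_simp
    ring
end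

section
/- Consider the (μ+1) EA with population size μ ≥ 1 and mutation probability p ∈ (0,1) on the OneMax function on {0,1}^n with uniformly random initialization, and let b = ⌊ n(1 − 1/μ) ⌋. For every target k with 1 ≤ k ≤ n, the expected number of fitness evaluations T_k until the population contains an individual of OneMax value at least k satisfies E[T_k] ≤ μ + (μ/(1−p)^n) · ( 2k − 1 − (n−k)·ln( n/(n−k+1) ) ) + (μ/(p(1−p)^{n−1})) · R, where R = k/n if k ≤ b+1, and R = (b+1)/n + (1/μ)·(H_{n−b−1} − H_{n−k}) otherwise. -/
open MeasureTheory Finset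

/-- The OneMax fitness: the number of one-bits of `x`. -/
def oneMax (n : ℕ) (x : Fin n → Bool) : ℕ :=
  (Finset.univ.filter (fun i : Fin n => x i = true)).card

/-- Selection of the (μ+1) EA on OneMax: given the current population `X` and the offspring
`y`, the new population consists of the `μ` best among the `μ+1` individuals, ties broken
uniformly at random, preferring the offspring in the case of ties. `selProb n μ X y X'` is
the probability that the new population is `X'`: if the offspring is the unique worst
individual it is discarded, and otherwise it replaces a uniformly chosen parent of worst
fitness. -/
noncomputable def selProb (n μ : ℕ) (X : Fin μ → Fin n → Bool) (y : Fin n → Bool)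
    (X' : Fin μ → Fin n → Bool) : ℝ :=
  let w : ℕ := (insert (oneMax n y) (Finset.univ.image fun i => oneMax n (X i))).min'
    (Finset.insert_nonempty _ _)
  let W : Finset (Fin μ) := Finset.univ.filter fun i => oneMax n (X i) = w
  if W = ∅ then (if X' = X then 1 else 0)
  else (∑ i ∈ W, if X' = Function.update X i y then (1 : ℝ) else 0) / (W.card : ℝ)

/-- Transition probability of the (μ+1) EA with mutation probability `p` on OneMax:
a parent is chosen uniformly at random, an offspring is created from it by standard bit
mutation, and the new population keeps the `μ` best of the `μ+1` individuals (ties broken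
randomly, preferring the offspring). -/
noncomputable def muPlusOneKernel (n μ : ℕ) (p : ℝ)
    (X X' : Fin μ → Fin n → Bool) : ℝ :=
  (1 / (μ : ℝ)) * ∑ j : Fin μ, ∑ y : Fin n → Bool,
    sbmProb n p (X j) y * selProb n μ X y X'

/-!
A drift argument bounds the hitting time: if a nonnegative potential `g ≤ M` on the states of a
Markov chain decreases in expectation by at least one in every step taken outside the target,
then the expected hitting time of the target is at most `M`. It is proved by following the chain
killed on hitting the target, whose expected potential drops by the probability of survival.

For the (μ+1) EA, write `A = μ/(1-p)^n` and `B = μ/(p(1-p)^(n-1))`. With `c` individuals of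
best fitness `i`, an iteration clones one of them over a worst individual with probability at
least `(c/μ)(1-p)^n = A⁻¹ c`, and improves on one of them with probability at least
`(c/μ)(n-i)p(1-p)^(n-1) = B⁻¹ c (n-i)`. The potential is the fitness-level bound on the remaining
time: on each level `l`, first clone until `cstar = min(μ, ⌈n/(n-l)⌉)` best individuals exist, at
cost `A (1 + 1/2 + ⋯ + 1/(cstar-1))`, then wait for an improvement, at cost `B/(cstar (n-l))`.
Selection never raises it, and each of the two phases lowers it by one per iteration in
expectation. Summing the level costs with `H_m ≤ 1 + ln m` gives the stated bound; beyond
`b = ⌊n(1-1/μ)⌋` the cap `cstar = μ` is attained and the improvement costs sum to harmonic numbers.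
-/

lemma sum_mul_le_sub_mul {ι : Type*} [Fintype ι] {w f : ι → ℝ} {G δ : ℝ} (F : Finset ι)
    (hw0 : ∀ i, 0 ≤ w i) (hw1 : ∑ i, w i = 1) (hf : ∀ i, f i ≤ G) (hF : ∀ i ∈ F, f i ≤ G - δ) :
    ∑ i, w i * f i ≤ G - (∑ i ∈ F, w i) * δ := by
  classical
  calc ∑ i, w i * f i ≤ ∑ i, (w i * G - if i ∈ F then w i * δ else 0) := by
        refine Finset.sum_le_sum fun i _ => ?_
        split_ifs with hi
        · nlinarith [hF i hi, hw0 i]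
        · simpa using mul_le_mul_of_nonneg_left (hf i) (hw0 i)
    _ = G - (∑ i ∈ F, w i) * δ := by
        rw [Finset.sum_sub_distrib, ← Finset.sum_mul, hw1, one_mul, Finset.sum_ite_mem,
          Finset.univ_inter, Finset.sum_mul]

section MarkovChain

variable {Ω S : Type*} {x : ℕ → Ω → S} {good : S → Prop}

def pathPrefix (x : ℕ → Ω → S) (t : ℕ) (ω : Ω) : Fin (t + 1) → S := fun u => x u ω

def survivalSet (x : ℕ → Ω → S) (good : S → Prop) (t : ℕ) (s : S) : Set Ω :=
  pathPrefix x t ⁻¹' {a | (∀ u, ¬ good (a u)) ∧ a (Fin.last t) = s}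

lemma survivalSet_eq_empty {t : ℕ} {s : S} (hs : good s) : survivalSet x good t s = ∅ :=
  Set.eq_empty_of_forall_notMem fun _ ⟨havoid, hlast⟩ => havoid (Fin.last t) (hlast ▸ hs)

lemma notHit_subset_iUnion_survivalSet [Fintype S] (t : ℕ) :
    {ω | ∀ u ≤ t, ¬ good (x u ω)} ⊆ ⋃ s ∈ Finset.univ, survivalSet x good t s := by
  intro ω hω
  simp only [Set.mem_iUnion, Finset.mem_univ, exists_true_left]
  exact ⟨x t ω, fun u => hω u (Nat.lt_succ_iff.mp u.isLt), rfl⟩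

lemma hitTime_le_tsum_indicator (ω : Ω) :
    hitTime x good ω ≤ ∑' t, {ω | ∀ u ≤ t, ¬ good (x u ω)}.indicator 1 ω := by
  classical
  have hone : ∀ t, (∀ u ≤ t, ¬ good (x u ω)) →
      {ω | ∀ u ≤ t, ¬ good (x u ω)}.indicator 1 ω = (1 : ENNReal) :=
    fun t ht => Set.indicator_of_mem (s := {ω | ∀ u ≤ t, ¬ good (x u ω)}) ht 1
  by_cases hex : ∃ t, good (x t ω)
  · calc hitTime x good ω ≤ (Nat.find hex : ENNReal) := sInf_le ⟨_, rfl, Nat.find_spec hex⟩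
      _ = ∑ t ∈ Finset.range (Nat.find hex), {ω | ∀ u ≤ t, ¬ good (x u ω)}.indicator 1 ω := by
        rw [Finset.sum_congr rfl fun t ht => hone t fun u hu =>
          Nat.find_min hex (hu.trans_lt (Finset.mem_range.mp ht))]
        simp
      _ ≤ _ := ENNReal.sum_le_tsum _
  · push Not at hex
    simp [hone _ fun u _ => hex u]

variable [MeasurableSpace Ω] [MeasurableSpace S] [Fintype S] {P : Measure Ω} {init : S → ℝ}
  {K : S → S → ℝ}

lemma IsMarkovProcess.measurable_pathPrefix (h : IsMarkovProcess P x init K) (t : ℕ) :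
    Measurable (pathPrefix x t) :=
  measurable_pi_lambda _ fun u => h.1 u

lemma IsMarkovProcess.measure_pathPrefix_singleton_inter (h : IsMarkovProcess P x init K)
    (t : ℕ) (a : Fin (t + 1) → S) (s' : S) :
    P (pathPrefix x t ⁻¹' {a} ∩ {ω | x (t + 1) ω = s'})
      = P (pathPrefix x t ⁻¹' {a}) * ENNReal.ofReal (K (a (Fin.last t)) s') := by
  let a' : ℕ → S := fun u => if hu : u ≤ t then a ⟨u, Nat.lt_succ_of_le hu⟩ else s'
  have hprefix : pathPrefix x t ⁻¹' {a} = {ω | ∀ u ≤ t, x u ω = a' u} := by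
    ext ω
    simp only [Set.mem_preimage, Set.mem_singleton_iff, funext_iff, pathPrefix, Fin.forall_iff,
      Set.mem_ofPred_eq, a', Nat.lt_succ_iff]
    exact forall₂_congr fun u hu => by rw [dif_pos hu]
  have hext : pathPrefix x t ⁻¹' {a} ∩ {ω | x (t + 1) ω = s'}
      = {ω | ∀ u ≤ t + 1, x u ω = a' u} := by
    ext ω
    simp only [hprefix, Set.mem_inter_iff, Set.mem_ofPred_eq]
    constructor
    · rintro ⟨hle, hlast⟩ u hu
      rcases Nat.of_le_succ hu with hu | rfl
      · exact hle u hu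
      · simpa [a'] using hlast
    · intro hle
      exact ⟨fun u hu => hle u (Nat.le_succ_of_le hu), by simpa [a'] using hle (t + 1) le_rfl⟩
  rw [hext, h.2.2 t a', ← hprefix]
  simp only [a', dif_pos le_rfl, dif_neg (Nat.not_succ_le_self t)]
  rfl

lemma IsMarkovProcess.measure_pathPrefix_preimage_inter [MeasurableSingletonClass S]
    (h : IsMarkovProcess P x init K) (t : ℕ) {E : Set (Fin (t + 1) → S)} {s : S}
    (hE : ∀ a ∈ E, a (Fin.last t) = s) (s' : S) :
    P (pathPrefix x t ⁻¹' E ∩ {ω | x (t + 1) ω = s'})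
      = P (pathPrefix x t ⁻¹' E) * ENNReal.ofReal (K s s') := by
  classical
  have hmeas : ∀ B : Set (Fin (t + 1) → S), MeasurableSet (pathPrefix x t ⁻¹' B) :=
    fun B => h.measurable_pathPrefix t B.toFinite.measurableSet
  lift E to Finset (Fin (t + 1) → S) using E.toFinite
  rw [← Measure.restrict_apply (hmeas _), ← sum_measure_preimage_singleton _ fun a _ => hmeas _,
    ← sum_measure_preimage_singleton _ fun a _ => hmeas _, Finset.sum_mul]
  refine Finset.sum_congr rfl fun a ha => ?_
  rw [Measure.restrict_apply (hmeas _), h.measure_pathPrefix_singleton_inter, hE a ha]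

lemma IsMarkovProcess.measure_survivalSet_succ_le [MeasurableSingletonClass S]
    (h : IsMarkovProcess P x init K) (t : ℕ) (s' : S) :
    P (survivalSet x good (t + 1) s')
      ≤ ∑ s, P (survivalSet x good t s) * ENNReal.ofReal (K s s') := by
  have hsub : survivalSet x good (t + 1) s'
      ⊆ ⋃ s ∈ Finset.univ, survivalSet x good t s ∩ {ω | x (t + 1) ω = s'} := by
    rintro ω ⟨havoid, hlast⟩
    simp only [Set.mem_iUnion, Finset.mem_univ, exists_true_left]
    exact ⟨x t ω, ⟨fun u => havoid u.castSucc, rfl⟩, hlast⟩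
  calc P (survivalSet x good (t + 1) s')
      ≤ ∑ s, P (survivalSet x good t s ∩ {ω | x (t + 1) ω = s'}) :=
        (measure_mono hsub).trans (measure_biUnion_finset_le _ _)
    _ = ∑ s, P (survivalSet x good t s) * ENNReal.ofReal (K s s') :=
        Finset.sum_congr rfl fun s _ =>
          h.measure_pathPrefix_preimage_inter t (fun _ ha => ha.2) s'

lemma IsMarkovProcess.measure_notHit_add_potential_succ_le [MeasurableSingletonClass S]
    (h : IsMarkovProcess P x init K) (hK0 : ∀ s s', 0 ≤ K s s') {g : S → ℝ}
    (hg0 : ∀ s, 0 ≤ g s) (hdrift : ∀ s, ¬ good s → 1 + ∑ s', K s s' * g s' ≤ g s) (t : ℕ) :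
    P {ω | ∀ u ≤ t, ¬ good (x u ω)}
        + ∑ s, P (survivalSet x good (t + 1) s) * ENNReal.ofReal (g s)
      ≤ ∑ s, P (survivalSet x good t s) * ENNReal.ofReal (g s) := by
  have hdrift' : ∀ s, ¬ good s →
      1 + ∑ s', ENNReal.ofReal (K s s') * ENNReal.ofReal (g s') ≤ ENNReal.ofReal (g s) := by
    intro s hs
    have hKg : ∀ s', 0 ≤ K s s' * g s' := fun s' => mul_nonneg (hK0 s s') (hg0 s')
    simp_rw [← ENNReal.ofReal_mul (hK0 s _)]
    rw [← ENNReal.ofReal_sum_of_nonneg fun s' _ => hKg s', ← ENNReal.ofReal_one,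
      ← ENNReal.ofReal_add zero_le_one (Finset.sum_nonneg fun s' _ => hKg s')]
    exact ENNReal.ofReal_le_ofReal (hdrift s hs)
  calc _ ≤ ∑ s, P (survivalSet x good t s)
        + ∑ s', (∑ s, P (survivalSet x good t s) * ENNReal.ofReal (K s s'))
          * ENNReal.ofReal (g s') :=
        add_le_add ((measure_mono (notHit_subset_iUnion_survivalSet t)).trans
          (measure_biUnion_finset_le _ _))
          (Finset.sum_le_sum fun s' _ => mul_le_mul_left (h.measure_survivalSet_succ_le t s') _)
    _ = ∑ s, P (survivalSet x good t s)
          * (1 + ∑ s', ENNReal.ofReal (K s s') * ENNReal.ofReal (g s')) := by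
        simp_rw [Finset.sum_mul, mul_add, mul_one, Finset.mul_sum, mul_assoc]
        rw [Finset.sum_add_distrib, Finset.sum_comm]
    _ ≤ ∑ s, P (survivalSet x good t s) * ENNReal.ofReal (g s) := by
        refine Finset.sum_le_sum fun s _ => ?_
        by_cases hs : good s
        · simp [survivalSet_eq_empty hs]
        · exact mul_le_mul_right (hdrift' s hs) _

theorem IsMarkovProcess.lintegral_hitTime_le [MeasurableSingletonClass S] [IsProbabilityMeasure P]
    (h : IsMarkovProcess P x init K) (hK0 : ∀ s s', 0 ≤ K s s') {g : S → ℝ}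
    (hg0 : ∀ s, 0 ≤ g s) (hdrift : ∀ s, ¬ good s → 1 + ∑ s', K s s' * g s' ≤ g s) {M : ℝ}
    (hM : ∀ s, g s ≤ M) :
    ∫⁻ ω, hitTime x good ω ∂P ≤ ENNReal.ofReal M := by
  set φ : ℕ → ENNReal := fun t => ∑ s, P (survivalSet x good t s) * ENNReal.ofReal (g s)
  have hmeas : ∀ t, MeasurableSet {ω | ∀ u ≤ t, ¬ good (x u ω)} := fun t => by
    simp only [Set.ofPred_forall]
    exact .iInter fun u => .iInter fun _ => h.1 u (Set.toFinite {s | ¬ good s}).measurableSet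
  have htelescope : ∀ T, ∑ t ∈ Finset.range T, P {ω | ∀ u ≤ t, ¬ good (x u ω)} + φ T ≤ φ 0 := by
    intro T
    induction T with
    | zero => simp
    | succ T ih =>
      rw [Finset.sum_range_succ, add_assoc]
      exact (add_le_add_right (h.measure_notHit_add_potential_succ_le hK0 hg0 hdrift T) _).trans ih
  have hφ0 : φ 0 ≤ ENNReal.ofReal M := by
    calc φ 0 ≤ ∑ s, P (x 0 ⁻¹' {s}) * ENNReal.ofReal M :=
          Finset.sum_le_sum fun s _ => mul_le_mul' (measure_mono fun ω hω => hω.2)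
            (ENNReal.ofReal_le_ofReal (hM s))
      _ = ENNReal.ofReal M := by
          rw [← Finset.sum_mul, sum_measure_preimage_singleton _ fun s _ => h.1 0 (.singleton s)]
          simp
  calc ∫⁻ ω, hitTime x good ω ∂P
      ≤ ∫⁻ ω, ∑' t, {ω | ∀ u ≤ t, ¬ good (x u ω)}.indicator 1 ω ∂P :=
        lintegral_mono hitTime_le_tsum_indicator
    _ = ∑' t, P {ω | ∀ u ≤ t, ¬ good (x u ω)} :=
        (lintegral_tsum fun t => (measurable_const.indicator (hmeas t)).aemeasurable).trans
          (tsum_congr fun t => lintegral_indicator_one (hmeas t))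
    _ ≤ ENNReal.ofReal M :=
        ENNReal.tsum_le_of_sum_range_le fun T => (le_self_add.trans (htelescope T)).trans hφ0

end MarkovChain

namespace MuPlusOneEA

lemma harm_eq_harmonic (m : ℕ) : harm m = harmonic m := by
  simp [harm, harmonic]

lemma harm_succ (m : ℕ) : harm (m + 1) = harm m + 1 / ((m : ℝ) + 1) := by
  simp [harm, Finset.sum_range_succ]

lemma harm_mono : Monotone harm := fun _ _ h =>
  Finset.sum_le_sum_of_subset_of_nonneg (Finset.range_subset_range.mpr h) fun _ _ _ => by positivity

lemma harm_nonneg (m : ℕ) : 0 ≤ harm m := by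
  simpa [harm] using harm_mono (Nat.zero_le m)

lemma harm_sub_harm_eq_sum {n a c : ℕ} (hac : a ≤ c) (hcn : c ≤ n) :
    harm (n - a) - harm (n - c) = ∑ l ∈ Finset.Ico a c, 1 / ((n - l : ℕ) : ℝ) := by
  induction c, hac using Nat.le_induction with
  | base => simp
  | succ c hac ih =>
    rw [Finset.sum_Ico_succ_top hac, ← ih (by omega), show n - c = (n - (c + 1)) + 1 by omega,
      harm_succ]
    push_cast
    ring

/-- `(n - 1) / (n - l) + 1 = ⌈n / (n - l)⌉` for `l < n`: the number of best individuals to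
accumulate by cloning on level `l` before waiting for an improvement, capped at `μ`. -/
def cstar (n μ l : ℕ) : ℕ := min μ ((n - 1) / (n - l) + 1)

lemma cstar_zero_sub_one (n μ : ℕ) : cstar n μ 0 - 1 = 0 := by
  have : (n - 1) / (n - 0) = 0 := Nat.div_eq_zero_iff.mpr (by omega)
  exact Nat.sub_eq_zero_of_le ((min_le_right _ _).trans (by rw [this]))

lemma cstar_le_mu (n μ l : ℕ) : cstar n μ l ≤ μ := min_le_left _ _

lemma cstar_pos {n μ : ℕ} (hμ : 1 ≤ μ) (l : ℕ) : 0 < cstar n μ l :=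
  lt_min hμ (Nat.succ_pos _)

lemma cstar_sub_one_le {n l : ℕ} (μ : ℕ) (hl : l < n) :
    ((cstar n μ l - 1 : ℕ) : ℝ) ≤ (n : ℝ) / ((n : ℝ) - l) := by
  have hd : (0 : ℝ) < (n : ℝ) - l := sub_pos.mpr (by exact_mod_cast hl)
  calc ((cstar n μ l - 1 : ℕ) : ℝ) ≤ (((n - 1) / (n - l) : ℕ) : ℝ) := by
        exact_mod_cast Nat.sub_le_of_le_add (min_le_right _ _)
    _ ≤ ((n - 1 : ℕ) : ℝ) / ((n - l : ℕ) : ℝ) := Nat.cast_div_le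
    _ ≤ (n : ℝ) / ((n : ℝ) - l) := by
        rw [Nat.cast_sub hl.le]
        gcongr
        exact_mod_cast Nat.sub_le n 1

lemma le_cstar_mul {n μ l : ℕ} (hl : l < n) (hμl : n ≤ μ * (n - l)) :
    n ≤ cstar n μ l * (n - l) := by
  rcases min_choice μ ((n - 1) / (n - l) + 1) with h | h <;> rw [cstar, h]
  · exact hμl
  · have := Nat.lt_div_mul_add (a := n - 1) (show 0 < n - l by omega)
    rw [add_mul, one_mul]
    omega

lemma cstar_eq_of_mul_lt {n μ l : ℕ} (hl : l < n) (hμl : μ * (n - l) < n) : cstar n μ l = μ :=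
  min_eq_left <| Nat.le_succ_of_le <| (Nat.le_div_iff_mul_le (by omega)).mpr (by omega)

lemma harm_cstar_sub_one_le {n l : ℕ} (μ : ℕ) (hl : l < n) :
    harm (cstar n μ l - 1) ≤ 1 + Real.log ((n : ℝ) / ((n : ℝ) - l)) := by
  have hd : (0 : ℝ) < (n : ℝ) - l := sub_pos.mpr (by exact_mod_cast hl)
  have hratio : 1 ≤ (n : ℝ) / ((n : ℝ) - l) := by
    rw [one_le_div hd]
    linarith [(Nat.cast_nonneg l : (0 : ℝ) ≤ l)]
  rw [harm_eq_harmonic]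
  refine (harmonic_le_one_add_log _).trans ?_
  gcongr 1 + ?_
  rcases Nat.eq_zero_or_pos (cstar n μ l - 1) with h0 | hpos
  · simpa [h0] using Real.log_nonneg hratio
  · exact Real.log_le_log (by exact_mod_cast hpos) (cstar_sub_one_le μ hl)

lemma sum_log_div_le {n k : ℕ} (hk1 : 1 ≤ k) (hkn : k ≤ n) :
    ∑ l ∈ Finset.Ico 1 k, Real.log ((n : ℝ) / ((n : ℝ) - l))
      ≤ k - ((n : ℝ) - k) * Real.log ((n : ℝ) / ((n : ℝ) - k + 1)) := by
  induction k, hk1 using Nat.le_induction with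
  | base => simp
  | succ k hk1 ih =>
    have hn : (n : ℝ) ≠ 0 := by exact_mod_cast (show n ≠ 0 by omega)
    have hD : (1 : ℝ) ≤ (n : ℝ) - k := by
      have : (k : ℝ) + 1 ≤ n := by exact_mod_cast hkn
      linarith
    -- `log (1 + 1/D) ≤ 1/D` for `D = n - k`
    have hstep : ((n : ℝ) - k) * (Real.log ((n : ℝ) - k + 1) - Real.log ((n : ℝ) - k)) ≤ 1 := by
      have h := Real.log_le_sub_one_of_pos (x := ((n : ℝ) - k + 1) / ((n : ℝ) - k)) (by positivity)
      rw [Real.log_div (by positivity) (by positivity), div_sub_one (by positivity),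
        add_sub_cancel_left, le_div_iff₀ (by positivity)] at h
      linarith
    have ih' := ih (by omega)
    rw [Real.log_div hn (by positivity)] at ih'
    rw [Finset.sum_Ico_succ_top hk1, Nat.cast_add_one, show (n : ℝ) - (k + 1) + 1 = n - k by ring,
      Real.log_div hn (by positivity)]
    linear_combination ih' + hstep

lemma sum_harm_cstar_le {n k : ℕ} (μ : ℕ) (hk1 : 1 ≤ k) (hkn : k ≤ n) :
    ∑ l ∈ Finset.range k, harm (cstar n μ l - 1)
      ≤ 2 * (k : ℝ) - 1 - ((n : ℝ) - k) * Real.log ((n : ℝ) / ((n : ℝ) - k + 1)) := by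
  rw [Finset.range_eq_Ico, Finset.sum_eq_sum_Ico_succ_bot hk1, cstar_zero_sub_one,
    show harm 0 = 0 by simp [harm], zero_add]
  calc ∑ l ∈ Finset.Ico 1 k, harm (cstar n μ l - 1)
      ≤ ∑ l ∈ Finset.Ico 1 k, (1 + Real.log ((n : ℝ) / ((n : ℝ) - l))) :=
        Finset.sum_le_sum fun l hl => harm_cstar_sub_one_le μ (by simp at hl; omega)
    _ ≤ 2 * (k : ℝ) - 1 - ((n : ℝ) - k) * Real.log ((n : ℝ) / ((n : ℝ) - k + 1)) := by
        rw [Finset.sum_add_distrib, Finset.sum_const, Nat.card_Ico, nsmul_eq_mul,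
          Nat.cast_sub hk1]
        linarith [sum_log_div_le hk1 hkn]

lemma le_floor_iff_le_mul_sub {n μ l : ℕ} (hμ : 1 ≤ μ) (hln : l ≤ n) :
    l ≤ ⌊(n : ℝ) * (1 - 1 / (μ : ℝ))⌋₊ ↔ n ≤ μ * (n - l) := by
  have hμ0 : (0 : ℝ) < μ := by exact_mod_cast hμ
  have hfrac : 1 / (μ : ℝ) ≤ 1 := by rw [div_le_one hμ0]; exact_mod_cast hμ
  rw [Nat.le_floor_iff (mul_nonneg (Nat.cast_nonneg n) (sub_nonneg.mpr hfrac)),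
    ← mul_le_mul_iff_of_pos_left hμ0, ← Nat.cast_le (α := ℝ), Nat.cast_mul, Nat.cast_sub hln]
  constructor <;> intro h <;> field_simp at h ⊢ <;> linarith

section Potential

variable {n μ k : ℕ} {A B : ℝ}

noncomputable def improveTime (n μ : ℕ) (B : ℝ) (l : ℕ) : ℝ := B / (cstar n μ l * (n - l : ℕ))

noncomputable def levelTime (n μ : ℕ) (A B : ℝ) (l : ℕ) : ℝ :=
  A * harm (cstar n μ l - 1) + improveTime n μ B l

noncomputable def remainingTime (n μ k : ℕ) (A B : ℝ) (i : ℕ) : ℝ :=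
  ∑ l ∈ Finset.Ico i k, levelTime n μ A B l

/-- For best fitness `i` attained by `c` individuals: the remaining fitness-level time, less the
cloning progress already made on level `i`. -/
noncomputable def levelPotential (n μ k : ℕ) (A B : ℝ) (i c : ℕ) : ℝ :=
  remainingTime n μ k A B i - if i < k then A * harm (min c (cstar n μ i) - 1) else 0

lemma improveTime_nonneg (hB : 0 ≤ B) (l : ℕ) : 0 ≤ improveTime n μ B l := by
  unfold improveTime
  positivity

lemma levelTime_nonneg (hA : 0 ≤ A) (hB : 0 ≤ B) (l : ℕ) : 0 ≤ levelTime n μ A B l :=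
  add_nonneg (mul_nonneg hA (harm_nonneg _)) (improveTime_nonneg hB l)

lemma remainingTime_antitone (hA : 0 ≤ A) (hB : 0 ≤ B) : Antitone (remainingTime n μ k A B) :=
  fun _ _ h => Finset.sum_le_sum_of_subset_of_nonneg (Finset.Ico_subset_Ico h le_rfl)
    fun l _ _ => levelTime_nonneg hA hB l

lemma remainingTime_eq_add {i : ℕ} (hik : i < k) :
    remainingTime n μ k A B i = levelTime n μ A B i + remainingTime n μ k A B (i + 1) :=
  Finset.sum_eq_sum_Ico_succ_bot hik _

lemma levelPotential_le_remainingTime (hA : 0 ≤ A) (i c : ℕ) :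
    levelPotential n μ k A B i c ≤ remainingTime n μ k A B i := by
  unfold levelPotential
  split_ifs <;> nlinarith [harm_nonneg (min c (cstar n μ i) - 1)]

lemma levelPotential_eq {i : ℕ} (c : ℕ) (hik : i < k) :
    levelPotential n μ k A B i c = A * (harm (cstar n μ i - 1) - harm (min c (cstar n μ i) - 1))
      + improveTime n μ B i + remainingTime n μ k A B (i + 1) := by
  rw [levelPotential, if_pos hik, remainingTime_eq_add hik, levelTime]
  ring

lemma improveTime_add_remainingTime_le (hA : 0 ≤ A) {i : ℕ} (c : ℕ) (hik : i < k) :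
    improveTime n μ B i + remainingTime n μ k A B (i + 1) ≤ levelPotential n μ k A B i c := by
  rw [levelPotential_eq c hik]
  have := harm_mono (Nat.sub_le_sub_right (min_le_right c (cstar n μ i)) 1)
  nlinarith

lemma levelPotential_nonneg (hA : 0 ≤ A) (hB : 0 ≤ B) (i c : ℕ) :
    0 ≤ levelPotential n μ k A B i c := by
  by_cases hik : i < k
  · exact (add_nonneg (improveTime_nonneg hB i)
      (Finset.sum_nonneg fun l _ => levelTime_nonneg hA hB l)).trans
      (improveTime_add_remainingTime_le hA c hik)
  · simp [levelPotential, remainingTime, hik, Finset.Ico_eq_empty_of_le (not_lt.mp hik)]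

lemma levelPotential_antitone (hA : 0 ≤ A) (i : ℕ) : Antitone (levelPotential n μ k A B i) := by
  intro c c' h
  unfold levelPotential
  split_ifs
  · have := harm_mono (Nat.sub_le_sub_right (min_le_min_right (cstar n μ i) h) 1)
    nlinarith
  · rfl

lemma levelPotential_succ_add {i c : ℕ} (hik : i < k) (hc : 1 ≤ c) (hcs : c < cstar n μ i) :
    levelPotential n μ k A B i (c + 1) + A / c = levelPotential n μ k A B i c := by
  have hharm : harm c = harm (c - 1) + 1 / c := by
    conv_lhs => rw [show c = c - 1 + 1 by omega]
    rw [harm_succ, Nat.cast_sub hc, Nat.cast_one, sub_add_cancel]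
  simp only [levelPotential, if_pos hik, min_eq_left (show c + 1 ≤ _ from hcs), min_eq_left hcs.le,
    Nat.add_sub_cancel, hharm]
  ring

end Potential

section Bound

variable {n μ k b : ℕ} {A B : ℝ}

lemma improveTime_le_of_le_floor (hB : 0 ≤ B) (hμ : 1 ≤ μ) {l : ℕ} (hln : l < n)
    (hlb : l ≤ ⌊(n : ℝ) * (1 - 1 / (μ : ℝ))⌋₊) : improveTime n μ B l ≤ B / n := by
  have hmul := le_cstar_mul hln ((le_floor_iff_le_mul_sub hμ hln.le).mp hlb)
  have hn : (0 : ℝ) < n := by exact_mod_cast (show 0 < n by omega)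
  unfold improveTime
  gcongr
  exact_mod_cast hmul

lemma improveTime_eq_of_floor_lt (hμ : 1 ≤ μ) {l : ℕ} (hln : l < n)
    (hlb : ⌊(n : ℝ) * (1 - 1 / (μ : ℝ))⌋₊ < l) :
    improveTime n μ B l = B / μ * (1 / ((n - l : ℕ) : ℝ)) := by
  have hmul : μ * (n - l) < n := by
    by_contra h
    exact hlb.not_ge ((le_floor_iff_le_mul_sub hμ hln.le).mpr (not_lt.mp h))
  rw [improveTime, cstar_eq_of_mul_lt hln hmul]
  field_simp

lemma sum_improveTime_le (hB : 0 ≤ B) (hμ : 1 ≤ μ) (hkn : k ≤ n)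
    (hb : b = ⌊(n : ℝ) * (1 - 1 / (μ : ℝ))⌋₊) :
    ∑ l ∈ Finset.range k, improveTime n μ B l
      ≤ B * (if k ≤ b + 1 then (k : ℝ) / n
          else ((b : ℝ) + 1) / n + (1 / (μ : ℝ)) * (harm (n - b - 1) - harm (n - k))) := by
  split_ifs with hk
  · calc ∑ l ∈ Finset.range k, improveTime n μ B l ≤ ∑ l ∈ Finset.range k, B / n :=
          Finset.sum_le_sum fun l hl => improveTime_le_of_le_floor hB hμ
            (by simp at hl; omega) (by simp at hl; omega)
      _ = B * (k / n) := by simp; ring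
  · push Not at hk
    rw [← Finset.sum_range_add_sum_Ico _ (show b + 1 ≤ k by omega), Nat.sub_sub,
      harm_sub_harm_eq_sum (by omega) hkn, mul_add, Finset.mul_sum, Finset.mul_sum]
    refine add_le_add ?_ (Finset.sum_le_sum fun l hl => ?_)
    · calc _ ≤ ∑ l ∈ Finset.range (_ + 1), B / n :=
            Finset.sum_le_sum fun l hl => improveTime_le_of_le_floor hB hμ
              (by simp at hl; omega) (by simp at hl; omega)
        _ = _ := by simp; ring
    · rw [Finset.mem_Ico] at hl
      rw [improveTime_eq_of_floor_lt hμ (by omega) (by omega)]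
      ring_nf
      rfl

lemma remainingTime_zero_le (hA : 0 ≤ A) (hB : 0 ≤ B) (hμ : 1 ≤ μ) (hk1 : 1 ≤ k) (hkn : k ≤ n)
    (hb : b = ⌊(n : ℝ) * (1 - 1 / (μ : ℝ))⌋₊) :
    remainingTime n μ k A B 0
      ≤ A * (2 * (k : ℝ) - 1 - ((n : ℝ) - k) * Real.log ((n : ℝ) / ((n : ℝ) - k + 1)))
        + B * (if k ≤ b + 1 then (k : ℝ) / n
          else ((b : ℝ) + 1) / n + (1 / (μ : ℝ)) * (harm (n - b - 1) - harm (n - k))) := by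
  rw [remainingTime, ← Finset.range_eq_Ico]
  simp only [levelTime, Finset.sum_add_distrib, ← Finset.mul_sum]
  exact add_le_add (mul_le_mul_of_nonneg_left (sum_harm_cstar_le μ hk1 hkn) hA)
    (sum_improveTime_le hB hμ hkn hb)

end Bound

section Population

variable {n μ : ℕ}

def bestFitness (X : Fin μ → Fin n → Bool) : ℕ := Finset.univ.sup fun j => oneMax n (X j)

def bestSet (X : Fin μ → Fin n → Bool) : Finset (Fin μ) :=
  Finset.univ.filter fun j => oneMax n (X j) = bestFitness X

@[simp]
lemma mem_bestSet {X : Fin μ → Fin n → Bool} {j : Fin μ} :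
    j ∈ bestSet X ↔ oneMax n (X j) = bestFitness X := by
  simp [bestSet]

lemma le_bestFitness (X : Fin μ → Fin n → Bool) (j : Fin μ) : oneMax n (X j) ≤ bestFitness X :=
  Finset.le_sup (f := fun j => oneMax n (X j)) (Finset.mem_univ j)

lemma bestSet_nonempty (hμ : 1 ≤ μ) (X : Fin μ → Fin n → Bool) : (bestSet X).Nonempty := by
  obtain ⟨j, -, hj⟩ := Finset.exists_mem_eq_sup Finset.univ
    (Finset.univ_nonempty_iff.mpr ⟨⟨0, hμ⟩⟩) fun j => oneMax n (X j)
  exact ⟨j, Finset.mem_filter.mpr ⟨Finset.mem_univ j, hj.symm⟩⟩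

lemma bestFitness_lt_of_not_exists_le (hμ : 1 ≤ μ) {X : Fin μ → Fin n → Bool} {k : ℕ}
    (hX : ¬ ∃ i, k ≤ oneMax n (X i)) : bestFitness X < k := by
  obtain ⟨j, hj⟩ := bestSet_nonempty hμ X
  rw [bestSet, Finset.mem_filter] at hj
  exact not_le.mp fun h => hX ⟨j, hj.2 ▸ h⟩

lemma bestFitness_update_eq {X : Fin μ → Fin n → Bool} {i : Fin μ} {y : Fin n → Bool}
    (hi : oneMax n (X i) ≤ oneMax n y) (hy : oneMax n y ≤ bestFitness X) :
    bestFitness (Function.update X i y) = bestFitness X := by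
  refine le_antisymm (Finset.sup_le fun j _ => ?_) (Finset.sup_le fun j _ => ?_)
  · rw [Function.update_apply]
    split_ifs
    exacts [hy, le_bestFitness X j]
  · have := le_bestFitness (Function.update X i y) j
    rw [Function.update_apply] at this
    split_ifs at this with hji
    exacts [hji ▸ hi.trans this, this]

lemma card_bestSet_le_update {X : Fin μ → Fin n → Bool} {i : Fin μ} {y : Fin n → Bool}
    (hi : oneMax n (X i) ≤ oneMax n y) (hy : oneMax n y ≤ bestFitness X) :
    (bestSet X).card ≤ (bestSet (Function.update X i y)).card := by
  refine Finset.card_le_card fun j hj => ?_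
  simp only [bestSet, Finset.mem_filter, Finset.mem_univ, true_and,
    bestFitness_update_eq hi hy, Function.update_apply] at hj ⊢
  split_ifs with hji
  · subst hji
    omega
  · exact hj

lemma bestFitness_lt_update {X : Fin μ → Fin n → Bool} (i : Fin μ) {y : Fin n → Bool}
    (hy : bestFitness X < oneMax n y) : bestFitness X < bestFitness (Function.update X i y) :=
  hy.trans_le (by simpa using le_bestFitness (Function.update X i y) i)

lemma bestSet_update_clone {X : Fin μ → Fin n → Bool} (i : Fin μ) {j : Fin μ}
    (hj : j ∈ bestSet X) : bestSet (Function.update X i (X j)) = insert i (bestSet X) := by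
  rw [mem_bestSet] at hj
  have hbest := bestFitness_update_eq (i := i) (hj ▸ le_bestFitness X i) hj.le
  ext l
  simp only [bestSet, Finset.mem_filter, Finset.mem_univ, true_and, Finset.mem_insert, hbest,
    Function.update_apply]
  split_ifs with hli <;> simp [hli, hj]

end Population

section Mutation

variable {n : ℕ} {p : ℝ}

lemma sbmProb_nonneg (hp0 : 0 ≤ p) (hp1 : p ≤ 1) (x y : Fin n → Bool) : 0 ≤ sbmProb n p x y :=
  mul_nonneg (pow_nonneg hp0 _) (pow_nonneg (sub_nonneg.mpr hp1) _)

lemma sbmProb_eq_prod (x y : Fin n → Bool) :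
    sbmProb n p x y = ∏ i, if x i = y i then 1 - p else p := by
  classical
  have hcard := Finset.card_filter_add_card_filter_not (s := Finset.univ) fun i => x i = y i
  rw [Finset.card_univ, Fintype.card_fin] at hcard
  rw [Finset.prod_ite, Finset.prod_const, Finset.prod_const, sbmProb, mul_comm]
  have : hammingDist x y = (Finset.univ.filter fun i => ¬ x i = y i).card := rfl
  congr 2
  omega

lemma sum_sbmProb (x : Fin n → Bool) : ∑ y, sbmProb n p x y = 1 := by
  classical
  simp_rw [sbmProb_eq_prod]
  rw [← Fintype.prod_sum fun i (b : Bool) => if x i = b then 1 - p else p]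
  refine Finset.prod_eq_one fun i _ => ?_
  cases x i <;> simp

lemma sbmProb_self (x : Fin n → Bool) : sbmProb n p x x = (1 - p) ^ n := by
  simp [sbmProb]

def oneBitImprovements (x : Fin n → Bool) : Finset (Fin n → Bool) :=
  (Finset.univ.filter fun β => x β = false).image fun β => Function.update x β true

lemma card_oneBitImprovements (x : Fin n → Bool) :
    (oneBitImprovements x).card = n - oneMax n x := by
  classical
  rw [oneBitImprovements, Finset.card_image_of_injOn]
  · have := Finset.card_filter_add_card_filter_not (s := Finset.univ) fun β => x β = true
    simp only [Finset.card_univ, Fintype.card_fin, Bool.not_eq_true] at this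
    rw [oneMax]
    omega
  · intro β hβ β' _ h
    by_contra hne
    have := congrFun h β
    simp_all

lemma oneMax_of_mem_oneBitImprovements {x y : Fin n → Bool} (hy : y ∈ oneBitImprovements x) :
    oneMax n y = oneMax n x + 1 := by
  classical
  obtain ⟨β, hβ, rfl⟩ := Finset.mem_image.mp hy
  rw [Finset.mem_filter] at hβ
  rw [oneMax, oneMax, ← Finset.card_insert_of_notMem (a := β) (by simp [hβ.2])]
  congr 1
  ext i
  by_cases hi : i = β <;> simp [hi, Function.update_apply]

lemma sbmProb_of_mem_oneBitImprovements {x y : Fin n → Bool} (hy : y ∈ oneBitImprovements x) :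
    sbmProb n p x y = p * (1 - p) ^ (n - 1) := by
  classical
  obtain ⟨β, hβ, rfl⟩ := Finset.mem_image.mp hy
  rw [Finset.mem_filter] at hβ
  have hdist : hammingDist x (Function.update x β true) = 1 := by
    rw [hammingDist, Finset.card_eq_one]
    refine ⟨β, Finset.ext fun i => ?_⟩
    by_cases hi : i = β <;> simp [hi, hβ.2, Function.update_apply]
  rw [sbmProb, hdist, pow_one]

end Mutation

section Selection

variable {n μ : ℕ} {X : Fin μ → Fin n → Bool} {y : Fin n → Bool}

/-- The parents of minimal fitness among `X` and `y`; empty when `y` is strictly worse than the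
whole population, in which case the offspring is discarded. -/
noncomputable def worstSet (X : Fin μ → Fin n → Bool) (y : Fin n → Bool) : Finset (Fin μ) :=
  Finset.univ.filter fun i => oneMax n (X i) =
    (insert (oneMax n y) (Finset.univ.image fun i => oneMax n (X i))).min'
      (Finset.insert_nonempty _ _)

lemma selProb_eq (X' : Fin μ → Fin n → Bool) :
    selProb n μ X y X' = if worstSet X y = ∅ then (if X' = X then 1 else 0)
      else (∑ i ∈ worstSet X y, if X' = Function.update X i y then (1 : ℝ) else 0)
        / ((worstSet X y).card : ℝ) := rfl

lemma selProb_nonneg (X' : Fin μ → Fin n → Bool) : 0 ≤ selProb n μ X y X' := by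
  rw [selProb_eq]
  split_ifs
  all_goals positivity

lemma sum_selProb_mul_le {f : (Fin μ → Fin n → Bool) → ℝ} {D : ℝ}
    (hkeep : worstSet X y = ∅ → f X ≤ D)
    (hreplace : ∀ i ∈ worstSet X y, f (Function.update X i y) ≤ D) :
    ∑ X', selProb n μ X y X' * f X' ≤ D := by
  classical
  simp_rw [selProb_eq]
  split_ifs with hW
  · simpa [ite_mul] using hkeep hW
  · have hcard : (0 : ℝ) < (worstSet X y).card := by
      exact_mod_cast Finset.card_pos.mpr (Finset.nonempty_iff_ne_empty.mpr hW)
    simp_rw [div_mul_eq_mul_div, Finset.sum_mul, ite_mul, one_mul, zero_mul, ← Finset.sum_div]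
    rw [Finset.sum_comm, div_le_iff₀ hcard]
    simp only [Finset.sum_ite_eq', Finset.mem_univ, if_true]
    simpa [mul_comm] using Finset.sum_le_card_nsmul _ _ _ hreplace

lemma oneMax_le_of_mem_worstSet {i : Fin μ} (hi : i ∈ worstSet X y) :
    oneMax n (X i) ≤ oneMax n y ∧ ∀ j, oneMax n (X i) ≤ oneMax n (X j) := by
  rw [worstSet, Finset.mem_filter] at hi
  rw [hi.2]
  exact ⟨Finset.min'_le _ _ (Finset.mem_insert_self _ _), fun j =>
    Finset.min'_le _ _ (Finset.mem_insert_of_mem (Finset.mem_image_of_mem _ (Finset.mem_univ j)))⟩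

lemma worstSet_nonempty {j : Fin μ} (hj : oneMax n (X j) ≤ oneMax n y) :
    (worstSet X y).Nonempty := by
  have : Nonempty (Fin μ) := ⟨j⟩
  obtain ⟨i, hi⟩ := Finite.exists_min fun i => oneMax n (X i)
  refine ⟨i, Finset.mem_filter.mpr ⟨Finset.mem_univ i, le_antisymm ?_ ?_⟩⟩
  · refine Finset.le_min' _ _ _ fun m hm => ?_
    simp only [Finset.mem_insert, Finset.mem_image, Finset.mem_univ, true_and] at hm
    rcases hm with rfl | ⟨j', rfl⟩
    exacts [(hi j).trans hj, hi j']
  · exact Finset.min'_le _ _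
      (Finset.mem_insert_of_mem (Finset.mem_image_of_mem _ (Finset.mem_univ i)))

end Selection

section PopulationPotential

variable {n μ k : ℕ} {A B : ℝ} {X : Fin μ → Fin n → Bool}

noncomputable def potential (k : ℕ) (A B : ℝ) (X : Fin μ → Fin n → Bool) : ℝ :=
  levelPotential n μ k A B (bestFitness X) (bestSet X).card

lemma potential_nonneg (hA : 0 ≤ A) (hB : 0 ≤ B) (X : Fin μ → Fin n → Bool) :
    0 ≤ potential k A B X :=
  levelPotential_nonneg hA hB _ _

lemma potential_le_remainingTime_zero (hA : 0 ≤ A) (hB : 0 ≤ B) (X : Fin μ → Fin n → Bool) :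
    potential k A B X ≤ remainingTime n μ k A B 0 :=
  (levelPotential_le_remainingTime hA _ _).trans (remainingTime_antitone hA hB (Nat.zero_le _))

lemma potential_update_add_improveTime_le (hA : 0 ≤ A) (hB : 0 ≤ B) (hX : bestFitness X < k)
    (i : Fin μ) {y : Fin n → Bool} (hy : bestFitness X < oneMax n y) :
    potential k A B (Function.update X i y) + improveTime n μ B (bestFitness X)
      ≤ potential k A B X := by
  have hnew : potential k A B (Function.update X i y)
      ≤ remainingTime n μ k A B (bestFitness X + 1) :=
    (levelPotential_le_remainingTime hA _ _).trans
      (remainingTime_antitone hA hB (bestFitness_lt_update i hy))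
  have hold : improveTime n μ B (bestFitness X) + remainingTime n μ k A B (bestFitness X + 1)
      ≤ potential k A B X :=
    improveTime_add_remainingTime_le hA _ hX
  linarith

lemma potential_update_le (hA : 0 ≤ A) (hB : 0 ≤ B) (hX : bestFitness X < k) {i : Fin μ}
    {y : Fin n → Bool} (hi : oneMax n (X i) ≤ oneMax n y) :
    potential k A B (Function.update X i y) ≤ potential k A B X := by
  rcases lt_or_ge (bestFitness X) (oneMax n y) with hy | hy
  · linarith [potential_update_add_improveTime_le hA hB hX i hy, improveTime_nonneg (n := n)
      (μ := μ) hB (bestFitness X)]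
  · rw [potential, bestFitness_update_eq hi hy]
    exact levelPotential_antitone hA _ (card_bestSet_le_update hi hy)

lemma potential_update_clone_add (hX : bestFitness X < k) (i : Fin μ) {j : Fin μ}
    (hj : j ∈ bestSet X) (hi : i ∉ bestSet X)
    (hcs : (bestSet X).card < cstar n μ (bestFitness X)) :
    potential k A B (Function.update X i (X j)) + A / (bestSet X).card = potential k A B X := by
  have hbest : bestFitness (Function.update X i (X j)) = bestFitness X :=
    bestFitness_update_eq ((le_bestFitness X i).trans (mem_bestSet.mp hj).ge)
      (mem_bestSet.mp hj).le
  rw [potential, potential, hbest, bestSet_update_clone i hj, Finset.card_insert_of_notMem hi]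
  exact levelPotential_succ_add hX (Finset.card_pos.mpr ⟨j, hj⟩) hcs

lemma sum_selProb_potential_le (hA : 0 ≤ A) (hB : 0 ≤ B) (hX : bestFitness X < k)
    (y : Fin n → Bool) :
    ∑ X', selProb n μ X y X' * potential k A B X' ≤ potential k A B X :=
  sum_selProb_mul_le (fun _ => le_rfl) fun _ hi =>
    potential_update_le hA hB hX (oneMax_le_of_mem_worstSet hi).1

lemma sum_selProb_potential_clone_le (hX : bestFitness X < k) {j : Fin μ} (hj : j ∈ bestSet X)
    (hcs : (bestSet X).card < cstar n μ (bestFitness X)) :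
    ∑ X', selProb n μ X (X j) X' * potential k A B X'
      ≤ potential k A B X - A / (bestSet X).card := by
  obtain ⟨i₀, hi₀⟩ : ∃ i₀, i₀ ∉ bestSet X := by
    by_contra! h
    rw [Finset.eq_univ_of_forall h, Finset.card_univ, Fintype.card_fin] at hcs
    exact (cstar_le_mu n μ _).not_gt hcs
  refine sum_selProb_mul_le (fun hW => absurd hW (worstSet_nonempty (j := j) le_rfl).ne_empty)
    fun i hi => ?_
  have hnb : i ∉ bestSet X := fun hib => by
    have h₀ := (oneMax_le_of_mem_worstSet hi).2 i₀
    rw [mem_bestSet] at hib hi₀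
    exact hi₀ (le_antisymm (le_bestFitness X i₀) (hib ▸ h₀))
  linarith [potential_update_clone_add (A := A) (B := B) hX i hj hnb hcs]

lemma sum_selProb_potential_improve_le (hA : 0 ≤ A) (hB : 0 ≤ B) (hX : bestFitness X < k)
    (j : Fin μ) {y : Fin n → Bool} (hy : bestFitness X < oneMax n y) :
    ∑ X', selProb n μ X y X' * potential k A B X'
      ≤ potential k A B X - improveTime n μ B (bestFitness X) :=
  sum_selProb_mul_le
    (fun hW => absurd hW (worstSet_nonempty ((le_bestFitness X j).trans hy.le)).ne_empty)
    fun i _ => by linarith [potential_update_add_improveTime_le hA hB hX i hy]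

end PopulationPotential

section Kernel

variable {n μ k : ℕ} {p A B : ℝ} {X : Fin μ → Fin n → Bool}

lemma muPlusOneKernel_nonneg (hp0 : 0 ≤ p) (hp1 : p ≤ 1) (X X' : Fin μ → Fin n → Bool) :
    0 ≤ muPlusOneKernel n μ p X X' :=
  mul_nonneg (by positivity) (Finset.sum_nonneg fun _ _ => Finset.sum_nonneg fun _ _ =>
    mul_nonneg (sbmProb_nonneg hp0 hp1 _ _) (selProb_nonneg _))

lemma sum_muPlusOneKernel_mul (f : (Fin μ → Fin n → Bool) → ℝ) :
    ∑ X', muPlusOneKernel n μ p X X' * f X'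
      = ∑ j, 1 / (μ : ℝ) * ∑ y, sbmProb n p (X j) y * ∑ X', selProb n μ X y X' * f X' := by
  simp only [muPlusOneKernel, Finset.mul_sum, Finset.sum_mul, mul_assoc]
  rw [Finset.sum_comm]
  refine Finset.sum_congr rfl fun j _ => ?_
  rw [Finset.sum_comm]

lemma sum_sbmProb_mul_potential_le_of_lt_cstar (hp0 : 0 < p) (hp1 : p < 1)
    (hA : A = μ / (1 - p) ^ n) (hB : 0 ≤ B) (hX : bestFitness X < k) {j : Fin μ}
    (hj : j ∈ bestSet X) (hcs : (bestSet X).card < cstar n μ (bestFitness X)) :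
    ∑ y, sbmProb n p (X j) y * ∑ X', selProb n μ X y X' * potential k A B X'
      ≤ potential k A B X - μ / (bestSet X).card := by
  have hq : 0 < 1 - p := sub_pos.mpr hp1
  have hA0 : 0 ≤ A := hA ▸ by positivity
  calc _ ≤ potential k A B X - (∑ y ∈ {X j}, sbmProb n p (X j) y) * (A / (bestSet X).card) :=
        sum_mul_le_sub_mul {X j} (sbmProb_nonneg hp0.le hp1.le _) (sum_sbmProb _)
          (sum_selProb_potential_le hA0 hB hX) fun y hy => by
            rw [Finset.mem_singleton.mp hy]
            exact sum_selProb_potential_clone_le hX hj hcs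
    _ = potential k A B X - μ / (bestSet X).card := by
        rw [Finset.sum_singleton, sbmProb_self, hA]
        field_simp

lemma sum_sbmProb_mul_potential_le_of_cstar_le (hp0 : 0 < p) (hp1 : p < 1)
    (hA : 0 ≤ A) (hB : B = μ / (p * (1 - p) ^ (n - 1))) (hX : bestFitness X < k) (hkn : k ≤ n)
    {j : Fin μ} (hj : j ∈ bestSet X) (hcs : cstar n μ (bestFitness X) ≤ (bestSet X).card) :
    ∑ y, sbmProb n p (X j) y * ∑ X', selProb n μ X y X' * potential k A B X'
      ≤ potential k A B X - μ / (bestSet X).card := by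
  have hq : 0 < 1 - p := sub_pos.mpr hp1
  have hB0 : 0 ≤ B := hB ▸ by positivity
  have hgap : (0 : ℝ) < ((n - bestFitness X : ℕ) : ℝ) := by
    exact_mod_cast (show 0 < n - bestFitness X by omega)
  have hcs0 : (0 : ℝ) < cstar n μ (bestFitness X) := by exact_mod_cast cstar_pos j.pos _
  calc _ ≤ potential k A B X - (∑ y ∈ oneBitImprovements (X j), sbmProb n p (X j) y)
          * improveTime n μ B (bestFitness X) :=
        sum_mul_le_sub_mul _ (sbmProb_nonneg hp0.le hp1.le _) (sum_sbmProb _)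
          (sum_selProb_potential_le hA hB0 hX) fun y hy =>
            sum_selProb_potential_improve_le hA hB0 hX j (by
              rw [oneMax_of_mem_oneBitImprovements hy, mem_bestSet.mp hj]
              omega)
    _ = potential k A B X - μ / cstar n μ (bestFitness X) := by
        rw [Finset.sum_congr rfl fun y hy => sbmProb_of_mem_oneBitImprovements hy,
          Finset.sum_const, card_oneBitImprovements, mem_bestSet.mp hj, nsmul_eq_mul,
          improveTime, hB]
        field_simp
    _ ≤ potential k A B X - μ / (bestSet X).card := by
        gcongr

theorem muPlusOneKernel_drift (hμ : 1 ≤ μ) (hp0 : 0 < p) (hp1 : p < 1)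
    (hA : A = μ / (1 - p) ^ n) (hB : B = μ / (p * (1 - p) ^ (n - 1))) (hkn : k ≤ n)
    (hX : bestFitness X < k) :
    1 + ∑ X', muPlusOneKernel n μ p X X' * potential k A B X' ≤ potential k A B X := by
  have hq : 0 < 1 - p := sub_pos.mpr hp1
  have hA0 : 0 ≤ A := hA ▸ by positivity
  have hB0 : 0 ≤ B := hB ▸ by positivity
  have hμ0 : (0 : ℝ) < μ := by exact_mod_cast hμ
  have hc0 : (0 : ℝ) < (bestSet X).card := by exact_mod_cast (bestSet_nonempty hμ X).card_pos
  have hparent : ∀ j, ∑ y, sbmProb n p (X j) y * ∑ X', selProb n μ X y X' * potential k A B X'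
      ≤ potential k A B X := fun j => by
    simpa using sum_mul_le_sub_mul (δ := 0) ∅ (sbmProb_nonneg hp0.le hp1.le _) (sum_sbmProb _)
      (sum_selProb_potential_le hA0 hB0 hX) (by simp)
  have hbest : ∀ j ∈ bestSet X,
      ∑ y, sbmProb n p (X j) y * ∑ X', selProb n μ X y X' * potential k A B X'
        ≤ potential k A B X - μ / (bestSet X).card := fun j hj => by
    rcases lt_or_ge (bestSet X).card (cstar n μ (bestFitness X)) with hcs | hcs
    · exact sum_sbmProb_mul_potential_le_of_lt_cstar hp0 hp1 hA hB0 hX hj hcs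
    · exact sum_sbmProb_mul_potential_le_of_cstar_le hp0 hp1 hA0 hB hX hkn hj hcs
  have hmean := sum_mul_le_sub_mul (w := fun _ => 1 / (μ : ℝ)) (bestSet X)
    (fun _ => by positivity) (by simp; field_simp) hparent hbest
  rw [Finset.sum_const, nsmul_eq_mul,
    show (bestSet X).card * (1 / (μ : ℝ)) * (μ / (bestSet X).card) = 1 by field_simp] at hmean
  rw [sum_muPlusOneKernel_mul]
  linarith

end Kernel

end MuPlusOneEA

open MuPlusOneEA in
theorem muPlusOneEA_oneMax_fixed_target_upper_general
    (n μ : ℕ) (hμ : 1 ≤ μ)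
    (p : ℝ) (hp0 : 0 < p) (hp1 : p < 1)
    {Ω : Type*} [MeasurableSpace Ω] (P : Measure Ω) [IsProbabilityMeasure P]
    (x : ℕ → Ω → Fin μ → Fin n → Bool)
    (hchain : IsMarkovProcess P x (fun _ => 1 / 2 ^ (n * μ)) (muPlusOneKernel n μ p))
    (b : ℕ) (hb : b = ⌊(n : ℝ) * (1 - 1 / (μ : ℝ))⌋₊)
    (k : ℕ) (hk1 : 1 ≤ k) (hkn : k ≤ n) :
    ∫⁻ ω, ((μ : ENNReal) +
        hitTime x (fun X : Fin μ → Fin n → Bool => ∃ i, k ≤ oneMax n (X i)) ω) ∂P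
      ≤ ENNReal.ofReal ((μ : ℝ)
          + (μ : ℝ) / (1 - p) ^ n *
              (2 * (k : ℝ) - 1 - ((n : ℝ) - k) * Real.log ((n : ℝ) / ((n : ℝ) - k + 1)))
          + (μ : ℝ) / (p * (1 - p) ^ (n - 1)) *
              (if k ≤ b + 1 then (k : ℝ) / n
               else ((b : ℝ) + 1) / n + (1 / (μ : ℝ)) * (harm (n - b - 1) - harm (n - k)))) := by
  set A : ℝ := μ / (1 - p) ^ n with hA
  set B : ℝ := μ / (p * (1 - p) ^ (n - 1)) with hB
  have hq : 0 < 1 - p := sub_pos.mpr hp1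
  have hA0 : 0 ≤ A := by positivity
  have hB0 : 0 ≤ B := by positivity
  have hhit := hchain.lintegral_hitTime_le (muPlusOneKernel_nonneg hp0.le hp1.le)
    (potential_nonneg (k := k) hA0 hB0)
    (fun X hX => muPlusOneKernel_drift hμ hp0 hp1 hA hB hkn (bestFitness_lt_of_not_exists_le hμ hX))
    (potential_le_remainingTime_zero hA0 hB0)
  have hbound := remainingTime_zero_le hA0 hB0 hμ hk1 hkn hb
  have hrem0 : 0 ≤ remainingTime n μ k A B 0 :=
    Finset.sum_nonneg fun l _ => levelTime_nonneg hA0 hB0 l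
  rw [lintegral_add_left measurable_const, lintegral_const, measure_univ, mul_one,
    ← ENNReal.ofReal_natCast, add_assoc]
  calc _ ≤ ENNReal.ofReal μ + ENNReal.ofReal (remainingTime n μ k A B 0) := by gcongr
    _ = ENNReal.ofReal (μ + remainingTime n μ k A B 0) :=
        (ENNReal.ofReal_add (Nat.cast_nonneg μ) hrem0).symm
    _ ≤ _ := ENNReal.ofReal_le_ofReal (by linarith)

/-- Fixed-target upper bound for the (μ+1) EA with population size `μ ≥ 1` and mutation
probability `p ∈ (0,1)` on OneMax with uniformly random initialization: counting fitness
evaluations (`μ` for the initial population plus one per iteration), with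
`b = ⌊n(1−1/μ)⌋`, for every target `1 ≤ k ≤ n`,
`E[T_k] ≤ μ + (μ/(1−p)^n)·(2k − 1 − (n−k)·ln(n/(n−k+1))) + (μ/(p(1−p)^{n−1}))·R`,
where `R = k/n` if `k ≤ b+1` and `R = (b+1)/n + (1/μ)·(H_{n−b−1} − H_{n−k})` otherwise. -/
theorem muPlusOneEA_oneMax_fixed_target_upper
    (n μ : ℕ) (hn : 1 ≤ n) (hμ : 1 ≤ μ)
    (p : ℝ) (hp0 : 0 < p) (hp1 : p < 1)
    {Ω : Type*} [MeasurableSpace Ω] (P : Measure Ω) [IsProbabilityMeasure P]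
    (x : ℕ → Ω → Fin μ → Fin n → Bool)
    (hchain : IsMarkovProcess P x (fun _ => 1 / 2 ^ (n * μ)) (muPlusOneKernel n μ p))
    (b : ℕ) (hb : b = ⌊(n : ℝ) * (1 - 1 / (μ : ℝ))⌋₊)
    (k : ℕ) (hk1 : 1 ≤ k) (hkn : k ≤ n) :
    ∫⁻ ω, ((μ : ENNReal) +
        hitTime x (fun X : Fin μ → Fin n → Bool => ∃ i, k ≤ oneMax n (X i)) ω) ∂P
      ≤ ENNReal.ofReal ((μ : ℝ)
          + (μ : ℝ) / (1 - p) ^ n *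
              (2 * (k : ℝ) - 1 - ((n : ℝ) - k) * Real.log ((n : ℝ) / ((n : ℝ) - k + 1)))
          + (μ : ℝ) / (p * (1 - p) ^ (n - 1)) *
              (if k ≤ b + 1 then (k : ℝ) / n
               else ((b : ℝ) + 1) / n + (1 / (μ : ℝ)) * (harm (n - b - 1) - harm (n - k)))) :=
  muPlusOneEA_oneMax_fixed_target_upper_general n μ hμ p hp0 hp1 P x hchain b hb k hk1 hkn
end

section
/- (Additive drift, fixed-target upper bound.) Let k ∈ ℝ, let (X_t)_{t∈ℕ} be integrable real-valued random variables adapted to a filtration (F_t) with X_0 = x_0 ≥ k deterministic and with X_t ≥ B for some constant B and all t, and let T = inf{t : X_t ≤ k}. Suppose there is δ > 0 such that for all t, on the event {t < T}, X_t − E[X_{t+1} | F_t] ≥ δ almost surely. Then T is almost surely finite, X_T (the value of the process at time T) is integrable, and E[T] ≤ (x_0 − E[X_T]) / δ. -/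
open MeasureTheory

/-- First time at which the process `X` takes a value `≤ k` (`⊤` if this never happens). -/
noncomputable def hitTimeLE {Ω : Type*} (X : ℕ → Ω → ℝ) (k : ℝ) (ω : Ω) : ℕ∞ :=
  sInf {r : ℕ∞ | ∃ t : ℕ, r = (t : ℕ∞) ∧ X t ω ≤ k}

/-- The value `X_T` of the process at the (a.s. finite) stopping time `T`. -/
noncomputable def stoppedVal {Ω : Type*} (X : ℕ → Ω → ℝ) (T : Ω → ℕ∞) (ω : Ω) : ℝ :=
  X (T ω).toNat ω

/-!
Let `Y n = X (min n T)`. On `{n < T} ∈ ℱ n` the drift condition gives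
`E[Y (n+1)] ≤ E[Y n] - δ P(n < T)`, while `Y (n+1) = Y n` off that event, so
`E[Y n] + δ ∑_{t<n} P(t < T) ≤ x0`. As `Y n ≥ B`, the tail sum `∑ P(t < T) = E[T]` is finite,
hence `T < ∞` a.s. and `Y n → X_T` a.s. Fatou's lemma for `Y n - B` then makes `X_T` integrable
with `E[X_T] ≤ x0 - δ ∑_{t<n} P(t < T)` for every `n`, which is the bound on `E[T]`.
-/

open Filter Topology Finset
open scoped ENNReal

theorem ENat.encard_setOf_natCast_lt (m : ℕ∞) : {n : ℕ | (n : ℕ∞) < m}.encard = m := by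
  cases m with
  | top => simp
  | coe j =>
    have hset : {n : ℕ | (n : ℕ∞) < j} = Finset.range j := by ext; simp
    rw [hset, Set.encard_coe_eq_coe_finsetCard, Finset.card_range]

namespace MeasureTheory

variable {Ω : Type*} {m0 : MeasurableSpace Ω} {μ : Measure Ω}

section TailSum

variable {τ : Ω → ℕ∞}

theorem lintegral_toENNReal_eq_tsum_measure_lt
    (hτ : ∀ n : ℕ, MeasurableSet {ω | (n : ℕ∞) < τ ω}) :
    ∫⁻ ω, (τ ω : ℝ≥0∞) ∂μ = ∑' n : ℕ, μ {ω | (n : ℕ∞) < τ ω} := by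
  have hpt : ∀ ω, (τ ω : ℝ≥0∞) = ∑' n : ℕ, {ω | (n : ℕ∞) < τ ω}.indicator (fun _ => 1) ω := by
    intro ω
    rw [← ENat.encard_setOf_natCast_lt (τ ω), ← ENNReal.tsum_set_one,
      _root_.tsum_subtype _ fun _ => (1 : ℝ≥0∞)]
    simp [Set.indicator_apply]
  rw [lintegral_congr hpt,
    lintegral_tsum fun n => (measurable_const.indicator (hτ n)).aemeasurable]
  simp [lintegral_indicator (hτ _)]

theorem tsum_measure_lt_le_ofReal [IsFiniteMeasure μ] {c : ℝ}
    (hc : ∀ n, ∑ t ∈ range n, μ.real {ω | (t : ℕ∞) < τ ω} ≤ c) :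
    ∑' n : ℕ, μ {ω | (n : ℕ∞) < τ ω} ≤ ENNReal.ofReal c := by
  refine ENNReal.tsum_le_of_sum_range_le fun n => ?_
  calc ∑ t ∈ range n, μ {ω | (t : ℕ∞) < τ ω}
      = ENNReal.ofReal (∑ t ∈ range n, μ.real {ω | (t : ℕ∞) < τ ω}) := by
        simp [ENNReal.ofReal_sum_of_nonneg, ofReal_measureReal]
    _ ≤ ENNReal.ofReal c := ENNReal.ofReal_le_ofReal (hc n)

theorem ae_lt_top_of_tsum_measure_lt_ne_top (h : ∑' n : ℕ, μ {ω | (n : ℕ∞) < τ ω} ≠ ∞) :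
    ∀ᵐ ω ∂μ, τ ω < ⊤ := by
  have hle : ∀ n : ℕ, μ {ω | ¬ τ ω < ⊤} ≤ μ {ω | (n : ℕ∞) < τ ω} := fun n =>
    measure_mono fun ω hω => by simp_all
  exact nonpos_iff_eq_zero.1 <|
    ge_of_tendsto' (ENNReal.tendsto_atTop_zero_of_tsum_ne_top h) hle

end TailSum

section Fatou

variable {f : ℕ → Ω → ℝ} {g : Ω → ℝ} {C : ℝ}

theorem integrable_and_integral_le_of_tendsto_of_nonneg
    (hf : ∀ n, Integrable (f n) μ) (hf0 : ∀ n, 0 ≤ᵐ[μ] f n)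
    (hfg : ∀ᵐ ω ∂μ, Tendsto (f · ω) atTop (𝓝 (g ω)))
    (hC : ∀ᶠ n in atTop, ∫ ω, f n ω ∂μ ≤ C) :
    Integrable g μ ∧ ∫ ω, g ω ∂μ ≤ C := by
  have hg0 : 0 ≤ᵐ[μ] g := by
    filter_upwards [hfg, ae_all_iff.2 hf0] with ω h h0 using ge_of_tendsto' h h0
  have hC0 : 0 ≤ C := by
    obtain ⟨n, hn⟩ := hC.exists
    exact (integral_nonneg_of_ae (hf0 n)).trans hn
  have hlint : ∫⁻ ω, ENNReal.ofReal (g ω) ∂μ ≤ ENNReal.ofReal C := calc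
    ∫⁻ ω, ENNReal.ofReal (g ω) ∂μ = ∫⁻ ω, liminf (fun n => ENNReal.ofReal (f n ω)) atTop ∂μ :=
      lintegral_congr_ae <| by
        filter_upwards [hfg] with ω h
        exact ((ENNReal.continuous_ofReal.tendsto _).comp h).liminf_eq.symm
    _ ≤ liminf (fun n => ∫⁻ ω, ENNReal.ofReal (f n ω) ∂μ) atTop :=
      lintegral_liminf_le' fun n => (hf n).aemeasurable.ennreal_ofReal
    _ = liminf (fun n => ENNReal.ofReal (∫ ω, f n ω ∂μ)) atTop := by
      simp only [ofReal_integral_eq_lintegral_ofReal (hf _) (hf0 _)]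
    _ ≤ ENNReal.ofReal C :=
      liminf_le_of_frequently_le' (hC.mono fun n hn => ENNReal.ofReal_le_ofReal hn).frequently
  have hg : Integrable g μ :=
    ⟨aestronglyMeasurable_of_tendsto_ae atTop (fun n => (hf n).1) hfg,
      (hasFiniteIntegral_iff_ofReal hg0).2 (hlint.trans_lt ENNReal.ofReal_lt_top)⟩
  refine ⟨hg, ?_⟩
  rwa [← ENNReal.ofReal_le_ofReal_iff hC0, ofReal_integral_eq_lintegral_ofReal hg hg0]

theorem integrable_and_integral_le_of_tendsto [IsProbabilityMeasure μ] {B : ℝ}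
    (hf : ∀ n, Integrable (f n) μ) (hB : ∀ n ω, B ≤ f n ω)
    (hfg : ∀ᵐ ω ∂μ, Tendsto (f · ω) atTop (𝓝 (g ω)))
    (hC : ∀ᶠ n in atTop, ∫ ω, f n ω ∂μ ≤ C) :
    Integrable g μ ∧ ∫ ω, g ω ∂μ ≤ C := by
  obtain ⟨hgB, hgB_le⟩ := integrable_and_integral_le_of_tendsto_of_nonneg (C := C - B)
    (f := fun n ω => f n ω - B) (g := fun ω => g ω - B)
    (fun n => (hf n).sub (integrable_const B))
    (fun n => Eventually.of_forall fun ω => sub_nonneg.2 (hB n ω))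
    (hfg.mono fun ω h => h.sub_const B)
    (hC.mono fun n hn => by rw [integral_sub (hf n) (integrable_const B)]; simpa using hn)
  have hg : Integrable g μ :=
    (hgB.add (integrable_const B)).congr (Eventually.of_forall fun ω => by simp)
  refine ⟨hg, ?_⟩
  rw [integral_sub hg (integrable_const B)] at hgB_le
  simpa using hgB_le

end Fatou

section Drift

variable [IsFiniteMeasure μ] {ℱ : Filtration ℕ m0} {X : ℕ → Ω → ℝ} {δ : ℝ}

theorem setIntegral_succ_le_of_drift (hint : ∀ t, Integrable (X t) μ) {n : ℕ} {s : Set Ω}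
    (hs : MeasurableSet[ℱ n] s)
    (hdrift : ∀ᵐ ω ∂μ, ω ∈ s → δ ≤ X n ω - μ[X (n + 1)|ℱ n] ω) :
    ∫ ω in s, X (n + 1) ω ∂μ ≤ ∫ ω in s, X n ω ∂μ - δ * μ.real s := by
  calc ∫ ω in s, X (n + 1) ω ∂μ = ∫ ω in s, μ[X (n + 1)|ℱ n] ω ∂μ :=
        (setIntegral_condExp (ℱ.le n) (hint _) hs).symm
    _ ≤ ∫ ω in s, (X n ω - δ) ∂μ :=
        setIntegral_mono_on_ae integrable_condExp.integrableOn
          ((hint n).sub (integrable_const δ)).integrableOn (ℱ.le n s hs)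
          (hdrift.mono fun ω h hω => by linarith [h hω])
    _ = ∫ ω in s, X n ω ∂μ - δ * μ.real s := by
        rw [integral_sub (hint n).integrableOn (integrable_const δ), setIntegral_const,
          smul_eq_mul, mul_comm]

variable {τ : Ω → ℕ∞}

theorem integral_stoppedProcess_succ_le (hτ : IsStoppingTime ℱ τ)
    (hint : ∀ t, Integrable (X t) μ) {n : ℕ}
    (hdrift : ∀ᵐ ω ∂μ, (n : ℕ∞) < τ ω → δ ≤ X n ω - μ[X (n + 1)|ℱ n] ω) :
    ∫ ω, stoppedProcess X τ (n + 1) ω ∂μ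
      ≤ ∫ ω, stoppedProcess X τ n ω ∂μ - δ * μ.real {ω | (n : ℕ∞) < τ ω} := by
  set s := {ω | (n : ℕ∞) < τ ω}
  have hs : MeasurableSet[ℱ n] s := hτ.measurableSet_gt n
  have hs' : MeasurableSet s := ℱ.le n s hs
  have hY := integrable_stoppedProcess hτ hint
  have h_before_succ : ∫ ω in s, stoppedProcess X τ (n + 1) ω ∂μ = ∫ ω in s, X (n + 1) ω ∂μ :=
    setIntegral_congr_fun hs' fun ω (hω : (n : ℕ∞) < τ ω) =>
      stoppedProcess_eq_of_le (by exact_mod_cast Order.add_one_le_of_lt hω)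
  have h_before : ∫ ω in s, stoppedProcess X τ n ω ∂μ = ∫ ω in s, X n ω ∂μ :=
    setIntegral_congr_fun hs' fun ω hω => stoppedProcess_eq_of_le hω.le
  have h_after : ∫ ω in sᶜ, stoppedProcess X τ (n + 1) ω ∂μ
      = ∫ ω in sᶜ, stoppedProcess X τ n ω ∂μ :=
    setIntegral_congr_fun hs'.compl fun ω hω => by
      have hω : τ ω ≤ n := not_lt.1 hω
      rw [stoppedProcess_eq_of_ge hω,
        stoppedProcess_eq_of_ge (hω.trans (WithTop.coe_le_coe.2 n.le_succ))]
  have h_drift := setIntegral_succ_le_of_drift hint hs hdrift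
  rw [← integral_add_compl hs' (hY (n + 1)), ← integral_add_compl hs' (hY n)]
  linarith

theorem integral_stoppedProcess_le (hτ : IsStoppingTime ℱ τ)
    (hint : ∀ t, Integrable (X t) μ)
    (hdrift : ∀ t : ℕ, ∀ᵐ ω ∂μ, (t : ℕ∞) < τ ω → δ ≤ X t ω - μ[X (t + 1)|ℱ t] ω) (n : ℕ) :
    ∫ ω, stoppedProcess X τ n ω ∂μ
      ≤ ∫ ω, X 0 ω ∂μ - δ * ∑ t ∈ range n, μ.real {ω | (t : ℕ∞) < τ ω} := by
  induction n with
  | zero =>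
    have h0 : stoppedProcess X τ 0 = X 0 := funext fun ω => stoppedProcess_eq_of_le zero_le
    simp [h0]
  | succ n ih =>
    have h_step := integral_stoppedProcess_succ_le hτ hint (hdrift n)
    rw [sum_range_succ]
    linarith

end Drift

end MeasureTheory

open MeasureTheory

theorem hitTimeLE_eq_hittingAfter {Ω : Type*} (X : ℕ → Ω → ℝ) (k : ℝ) :
    hitTimeLE X k = hittingAfter X (Set.Iic k) 0 := by
  funext ω
  have hset : {r : ℕ∞ | ∃ t : ℕ, r = t ∧ X t ω ≤ k} = (↑) '' {t | X t ω ≤ k} := by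
    ext; simp [eq_comm, and_comm]
  rw [hitTimeLE, hset, hittingAfter]
  -- `hittingAfter` casts through `WithTop.some` rather than `Nat.cast`.
  split_ifs with h
  · obtain ⟨j, -, hj⟩ := h
    show _ = ((sInf {i | 0 ≤ i ∧ X i ω ∈ Set.Iic k} : ℕ) : ℕ∞)
    simp only [zero_le, true_and, Set.mem_Iic]
    rw [ENat.natCast_sInf ⟨j, hj⟩, sInf_image]
  · have hempty : {t | X t ω ≤ k} = ∅ := by
      ext t; simpa using fun hle => h ⟨t, t.zero_le, hle⟩
    rw [hempty, Set.image_empty, sInf_empty]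
    rfl

theorem MeasureTheory.Adapted.isStoppingTime_hitTimeLE {Ω : Type*} {m0 : MeasurableSpace Ω}
    {ℱ : Filtration ℕ m0} {X : ℕ → Ω → ℝ} (hX : Adapted ℱ X) (k : ℝ) :
    IsStoppingTime ℱ (hitTimeLE X k) :=
  hitTimeLE_eq_hittingAfter X k ▸ hX.isStoppingTime_hittingAfter measurableSet_Iic

theorem tendsto_stoppedProcess_stoppedVal {Ω : Type*} {X : ℕ → Ω → ℝ} {τ : Ω → ℕ∞} {ω : Ω}
    (hω : τ ω ≠ ⊤) :
    Tendsto (fun n => stoppedProcess X τ n ω) atTop (𝓝 (stoppedVal X τ ω)) := by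
  obtain ⟨m, hm⟩ := ENat.ne_top_iff_exists.1 hω
  refine tendsto_atTop_of_eventually_const (i₀ := m) fun n hn => ?_
  exact (stoppedProcess_eq_of_ge (u := X) (τ := τ) (hm ▸ WithTop.coe_le_coe.2 hn)).trans
    (by rw [stoppedVal, ← hm]; rfl)

theorem additive_drift_fixed_target_upper_general
    {Ω : Type*} {m0 : MeasurableSpace Ω} (μ : Measure Ω) [IsProbabilityMeasure μ]
    (ℱ : Filtration ℕ m0) (X : ℕ → Ω → ℝ)
    (hadapt : Adapted ℱ X) (hint : ∀ t, Integrable (X t) μ)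
    (k x0 B : ℝ) (hX0 : ∀ ω, X 0 ω = x0)
    (hB : ∀ t ω, B ≤ X t ω)
    (δ : ℝ) (hδ : 0 < δ)
    (hdrift : ∀ t : ℕ, ∀ᵐ ω ∂μ, (t : ℕ∞) < hitTimeLE X k ω →
      δ ≤ X t ω - (μ[X (t + 1)|ℱ t]) ω) :
    (∀ᵐ ω ∂μ, hitTimeLE X k ω < ⊤) ∧
    Integrable (stoppedVal X (hitTimeLE X k)) μ ∧
    ∫⁻ ω, ((hitTimeLE X k ω : ℕ∞) : ENNReal) ∂μ
      ≤ ENNReal.ofReal ((x0 - ∫ ω, stoppedVal X (hitTimeLE X k) ω ∂μ) / δ) := by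
  set τ := hitTimeLE X k
  have hτ : IsStoppingTime ℱ τ := hadapt.isStoppingTime_hitTimeLE k
  set S : ℕ → ℝ := fun n => ∑ t ∈ range n, μ.real {ω | (t : ℕ∞) < τ ω}
  have hS : Monotone S := fun n m hnm =>
    sum_le_sum_of_subset_of_nonneg (range_subset_range.2 hnm) fun _ _ _ => measureReal_nonneg
  have hY : ∀ n, ∫ ω, stoppedProcess X τ n ω ∂μ ≤ x0 - δ * S n := by
    simpa [hX0] using integral_stoppedProcess_le hτ hint hdrift
  have hYB : ∀ n ω, B ≤ stoppedProcess X τ n ω := fun n ω => hB _ ω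
  have hfin : ∀ᵐ ω ∂μ, τ ω < ⊤ := by
    refine ae_lt_top_of_tsum_measure_lt_ne_top <| ne_top_of_le_ne_top ENNReal.ofReal_ne_top <|
      tsum_measure_lt_le_ofReal (c := (x0 - B) / δ) fun n => ?_
    have hBY : B ≤ ∫ ω, stoppedProcess X τ n ω ∂μ := by
      simpa using integral_mono (integrable_const B) (integrable_stoppedProcess hτ hint n) (hYB n)
    rw [le_div_iff₀ hδ]
    linarith [hY n]
  have hlim : ∀ᵐ ω ∂μ, Tendsto (stoppedProcess X τ · ω) atTop (𝓝 (stoppedVal X τ ω)) :=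
    hfin.mono fun ω hω => tendsto_stoppedProcess_stoppedVal hω.ne
  have hstop : ∀ n, Integrable (stoppedVal X τ) μ ∧ ∫ ω, stoppedVal X τ ω ∂μ ≤ x0 - δ * S n :=
    fun n => integrable_and_integral_le_of_tendsto (integrable_stoppedProcess hτ hint) hYB hlim <|
      (eventually_ge_atTop n).mono fun m hnm =>
        (hY m).trans (sub_le_sub_left (mul_le_mul_of_nonneg_left (hS hnm) hδ.le) x0)
  refine ⟨hfin, (hstop 0).1, ?_⟩
  rw [lintegral_toENNReal_eq_tsum_measure_lt fun n => ℱ.le n _ (hτ.measurableSet_gt n)]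
  exact tsum_measure_lt_le_ofReal fun n => by
    rw [le_div_iff₀ hδ]
    linarith [(hstop n).2]

/-- Additive drift, fixed-target upper bound: if the process is integrable, adapted,
bounded below by a constant `B`, starts at the deterministic value `x0 ≥ k`, and has
additive drift at least `δ > 0` towards the target `k` before the hitting time
`T = inf{t : X_t ≤ k}`, then `T` is a.s. finite, `X_T` is integrable, and
`E[T] ≤ (x0 − E[X_T]) / δ`. -/
theorem additive_drift_fixed_target_upper
    {Ω : Type*} {m0 : MeasurableSpace Ω} (μ : Measure Ω) [IsProbabilityMeasure μ]
    (ℱ : Filtration ℕ m0) (X : ℕ → Ω → ℝ)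
    (hadapt : Adapted ℱ X) (hint : ∀ t, Integrable (X t) μ)
    (k x0 B : ℝ) (hx0 : k ≤ x0) (hX0 : ∀ ω, X 0 ω = x0)
    (hB : ∀ t ω, B ≤ X t ω)
    (δ : ℝ) (hδ : 0 < δ)
    (hdrift : ∀ t : ℕ, ∀ᵐ ω ∂μ, (t : ℕ∞) < hitTimeLE X k ω →
      δ ≤ X t ω - (μ[X (t + 1)|ℱ t]) ω) :
    (∀ᵐ ω ∂μ, hitTimeLE X k ω < ⊤) ∧
    Integrable (stoppedVal X (hitTimeLE X k)) μ ∧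
    ∫⁻ ω, ((hitTimeLE X k ω : ℕ∞) : ENNReal) ∂μ
      ≤ ENNReal.ofReal ((x0 - ∫ ω, stoppedVal X (hitTimeLE X k) ω ∂μ) / δ) :=
  additive_drift_fixed_target_upper_general μ ℱ X hadapt hint k x0 B hX0 hB δ hδ hdrift
end

section
/- (Multiplicative drift, fixed-target upper bound.) Let k' > 0 be a threshold, let (X_t)_{t∈ℕ} be integrable real-valued random variables adapted to a filtration (F_t) with X_0 = x_0 ≥ k' deterministic, and let T = inf{t : X_t < k'}. Suppose that X_t ≥ 0 for all t ≤ T, and that there is δ > 0 such that for all t, on the event {t < T}, X_t − E[X_{t+1} | F_t] ≥ δ·X_t almost surely. Then E[T] ≤ (1 + ln(x_0 / k')) / δ. -/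
/-!
Let `A t = {t < T}` and take the potential `Y t = 𝟙_{A t} · (1 + ln (X t / k'))`: it is
nonnegative and equals `1 + ln (x0 / k')` at time `0`. On `A t`, the inequality `ln z ≤ z - 1`
bounds `(X t - X (t + 1)) / X t` by the drop `Y t - Y (t + 1)` (also when the process falls
below `k'`, as then `X (t + 1) ≥ 0` and `Y t ≥ 1`). Pulling the `ℱ t`-measurable bounded factor
`𝟙_{A t} / X t` out of the conditional expectation, the drift condition makes the expectation of
this ratio at least `δ P(A t)`. Telescoping gives `δ E[T] = δ ∑ₜ P(t < T) ≤ E[Y 0]`.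
-/

open MeasureTheory

/-- First time at which the process `X` takes a value strictly below `k'`
(`⊤` if this never happens). -/
noncomputable def hitTimeLT {Ω : Type*} (X : ℕ → Ω → ℝ) (k' : ℝ) (ω : Ω) : ℕ∞ :=
  sInf {r : ℕ∞ | ∃ t : ℕ, r = (t : ℕ∞) ∧ X t ω < k'}

theorem hitTimeLT_le_iff {Ω : Type*} {X : ℕ → Ω → ℝ} {k' : ℝ} {ω : Ω} {t : ℕ} :
    hitTimeLT X k' ω ≤ t ↔ ∃ s ≤ t, X s ω < k' := by
  constructor
  · intro h
    have hne : {r : ℕ∞ | ∃ s : ℕ, r = s ∧ X s ω < k'}.Nonempty := by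
      by_contra hempty
      simp [hitTimeLT, Set.not_nonempty_iff_eq_empty.1 hempty] at h
    obtain ⟨s, hs, hXs⟩ := csInf_mem hne
    exact ⟨s, by rw [hitTimeLT, hs] at h; exact_mod_cast h, hXs⟩
  · rintro ⟨s, hst, hXs⟩
    rw [hitTimeLT]
    exact le_trans (sInf_le (by exact ⟨s, rfl, hXs⟩)) (by exact_mod_cast hst)

theorem coe_lt_hitTimeLT_iff {Ω : Type*} {X : ℕ → Ω → ℝ} {k' : ℝ} {ω : Ω} {t : ℕ} :
    (t : ℕ∞) < hitTimeLT X k' ω ↔ ∀ s ≤ t, k' ≤ X s ω := by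
  simpa using hitTimeLT_le_iff.not

theorem measurableSet_coe_lt_hitTimeLT {Ω : Type*} {m0 : MeasurableSpace Ω}
    {ℱ : Filtration ℕ m0} {X : ℕ → Ω → ℝ} (hX : Adapted ℱ X) (k' : ℝ) (t : ℕ) :
    MeasurableSet[ℱ t] {ω | (t : ℕ∞) < hitTimeLT X k' ω} := by
  simp_rw [coe_lt_hitTimeLT_iff, Set.ofPred_forall]
  exact MeasurableSet.iInter fun s => MeasurableSet.iInter fun hs =>
    ℱ.mono hs _ (hX s measurableSet_Ici)

theorem ENat.toENNReal_eq_tsum_ite (a : ℕ∞) :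
    (a : ENNReal) = ∑' t : ℕ, if (t : ℕ∞) < a then 1 else 0 := by
  cases a with
  | top => simp
  | coe n =>
    have := ENNReal.tsum_set_one {t : ℕ | t < n}
    rw [tsum_subtype (f := fun _ => (1 : ENNReal)), Set.Nat.encard_range] at this
    simpa [Set.indicator_apply] using this.symm

theorem lintegral_toENNReal_eq_tsum_measure_lt {Ω : Type*} [MeasurableSpace Ω] (μ : Measure Ω)
    {τ : Ω → ℕ∞} (hτ : ∀ t : ℕ, MeasurableSet {ω | (t : ℕ∞) < τ ω}) :
    ∫⁻ ω, (τ ω : ENNReal) ∂μ = ∑' t : ℕ, μ {ω | (t : ℕ∞) < τ ω} := by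
  have h (ω : Ω) : (τ ω : ENNReal) = ∑' t : ℕ, {ω | (t : ℕ∞) < τ ω}.indicator 1 ω := by
    simp [ENat.toENNReal_eq_tsum_ite, Set.indicator_apply]
  simp_rw [h]
  rw [lintegral_tsum fun t => (measurable_one.indicator (hτ t)).aemeasurable]
  simp [lintegral_indicator_one (hτ _)]

theorem ENNReal.tsum_le_ofReal_div_of_mul_toReal_le_sub {p : ℕ → ENNReal} (hp : ∀ t, p t ≠ ⊤)
    {v : ℕ → ℝ} (hv : ∀ t, 0 ≤ v t) {δ : ℝ} (hδ : 0 < δ)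
    (hdrop : ∀ t, δ * (p t).toReal ≤ v t - v (t + 1)) :
    ∑' t, p t ≤ ENNReal.ofReal (v 0 / δ) := by
  refine ENNReal.tsum_le_of_sum_range_le fun n => ?_
  rw [ENNReal.le_ofReal_iff_toReal_le (ENNReal.sum_ne_top.2 fun t _ => hp t)
    (div_nonneg (hv 0) hδ.le), ENNReal.toReal_sum fun t _ => hp t, le_div_iff₀' hδ,
    Finset.mul_sum]
  calc ∑ t ∈ Finset.range n, δ * (p t).toReal
      ≤ ∑ t ∈ Finset.range n, (v t - v (t + 1)) := Finset.sum_le_sum fun t _ => hdrop t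
    _ = v 0 - v n := Finset.sum_range_sub' v n
    _ ≤ v 0 := sub_le_self _ (hv n)

theorem integral_mul_condExp_of_bound {Ω : Type*} {m m0 : MeasurableSpace Ω} {μ : Measure Ω}
    [IsFiniteMeasure μ] (hm : m ≤ m0) {g y : Ω → ℝ} (hg : StronglyMeasurable[m] g)
    (hy : Integrable y μ) (c : ℝ) (hgc : ∀ᵐ ω ∂μ, ‖g ω‖ ≤ c) :
    ∫ ω, g ω * μ[y|m] ω ∂μ = ∫ ω, g ω * y ω ∂μ :=
  (integral_congr_ae (condExp_stronglyMeasurable_mul_of_bound hm hg hy c hgc)).symm.trans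
    (integral_condExp hm)

theorem mul_measureReal_le_setIntegral_div_of_condExp {Ω : Type*} {m m0 : MeasurableSpace Ω}
    {μ : Measure Ω} [IsFiniteMeasure μ] (hm : m ≤ m0) {A : Set Ω} (hA : MeasurableSet[m] A)
    {x y : Ω → ℝ} (hx : Measurable[m] x) (hy : Integrable y μ) {k δ : ℝ} (hk : 0 < k)
    (hxk : ∀ ω ∈ A, k ≤ x ω) (hdrift : ∀ᵐ ω ∂μ, ω ∈ A → δ * x ω ≤ x ω - μ[y|m] ω) :
    δ * μ.real A ≤ ∫ ω in A, (x ω - y ω) / x ω ∂μ := by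
  have hAm : MeasurableSet A := hm _ hA
  have hxpos : ∀ ω ∈ A, 0 < x ω := fun ω hω => hk.trans_le (hxk ω hω)
  set g := A.indicator fun ω => (x ω)⁻¹
  have hg : StronglyMeasurable[m] g := (hx.inv.indicator hA).stronglyMeasurable
  have hgk : ∀ᵐ ω ∂μ, ‖g ω‖ ≤ k⁻¹ := ae_of_all _ fun ω => by
    by_cases hω : ω ∈ A
    · simp only [g, Set.indicator_of_mem hω]
      rw [norm_inv, Real.norm_of_nonneg (hxpos ω hω).le]
      exact inv_anti₀ hk (hxk ω hω)
    · simp [g, hω, hk.le]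
  have hg' : AEStronglyMeasurable g μ := (hg.mono hm).aestronglyMeasurable
  have hone : Integrable (A.indicator 1) μ := (integrable_const (1 : ℝ)).indicator hAm
  have hgy : Integrable (fun ω => g ω * y ω) μ := hy.bdd_mul hg' hgk
  have hgcy : Integrable (fun ω => g ω * μ[y|m] ω) μ := integrable_condExp.bdd_mul hg' hgk
  calc δ * μ.real A = ∫ ω, A.indicator (fun _ => δ) ω ∂μ := by
        rw [integral_indicator_const _ hAm, smul_eq_mul, mul_comm]
    _ ≤ ∫ ω, (A.indicator 1 ω - g ω * μ[y|m] ω) ∂μ := by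
        refine integral_mono_ae ((integrable_const δ).indicator hAm) (hone.sub hgcy) ?_
        filter_upwards [hdrift] with ω hω
        by_cases hωA : ω ∈ A
        · simp only [g, Set.indicator_of_mem hωA, Pi.one_apply]
          rw [← div_eq_inv_mul, le_sub_comm, div_le_iff₀ (hxpos ω hωA)]
          linarith [hω hωA]
        · simp [g, hωA]
    _ = ∫ ω, (A.indicator 1 ω - g ω * y ω) ∂μ := by
        rw [integral_sub hone hgcy, integral_sub hone hgy,
          integral_mul_condExp_of_bound hm hg hy k⁻¹ hgk]
    _ = ∫ ω in A, (x ω - y ω) / x ω ∂μ := by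
        rw [← integral_indicator hAm]
        congr 1 with ω
        by_cases hωA : ω ∈ A
        · simp only [g, Set.indicator_of_mem hωA, Pi.one_apply]
          field_simp [(hxpos ω hωA).ne']
        · simp [g, hωA]

theorem integrableOn_div_of_le {Ω : Type*} {m0 : MeasurableSpace Ω} {μ : Measure Ω}
    {A : Set Ω} (hA : MeasurableSet A) {f x : Ω → ℝ} (hf : Integrable f μ)
    (hx : AEStronglyMeasurable x μ) {k : ℝ} (hk : 0 < k) (hxk : ∀ ω ∈ A, k ≤ x ω) :
    IntegrableOn (fun ω => f ω / x ω) A μ := by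
  refine Integrable.mono' (hf.norm.div_const k).integrableOn
    (hf.aemeasurable.div hx.aemeasurable).aestronglyMeasurable.restrict ?_
  refine ae_restrict_of_forall_mem hA fun ω hω => ?_
  rw [norm_div, Real.norm_of_nonneg (hk.le.trans (hxk ω hω))]
  gcongr
  exact hxk ω hω

theorem sub_div_le_one_add_log_div_sub_ite {k x y : ℝ} (hk : 0 < k) (hx : k ≤ x) (hy : 0 ≤ y) :
    (x - y) / x ≤ 1 + Real.log (x / k) - if k ≤ y then 1 + Real.log (y / k) else 0 := by
  have hx0 : 0 < x := hk.trans_le hx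
  have hsub : (x - y) / x = 1 - y / x := by field_simp
  split_ifs with hky
  · have hy0 : 0 < y := hk.trans_le hky
    have hlog : Real.log (y / k) - Real.log (x / k) = Real.log (y / x) := by
      rw [Real.log_div hy0.ne' hk.ne', Real.log_div hx0.ne' hk.ne', Real.log_div hy0.ne' hx0.ne']
      ring
    linarith [Real.log_le_sub_one_of_pos (div_pos hy0 hx0)]
  · linarith [div_nonneg hy hx0.le, Real.log_nonneg ((one_le_div hk).2 hx)]

noncomputable def logPotential {Ω : Type*} (X : ℕ → Ω → ℝ) (k' : ℝ) (t : ℕ) : Ω → ℝ :=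
  {ω | (t : ℕ∞) < hitTimeLT X k' ω}.indicator fun ω => 1 + Real.log (X t ω / k')

section logPotential

variable {Ω : Type*} {X : ℕ → Ω → ℝ} {k' : ℝ}

theorem logPotential_nonneg (hk : 0 < k') (t : ℕ) (ω : Ω) : 0 ≤ logPotential X k' t ω := by
  refine Set.indicator_nonneg (fun ω hω => ?_) ω
  have := Real.log_nonneg ((one_le_div hk).2 (coe_lt_hitTimeLT_iff.1 hω t le_rfl))
  linarith

theorem logPotential_le (hk : 0 < k') (t : ℕ) (ω : Ω) : logPotential X k' t ω ≤ |X t ω| / k' := by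
  unfold logPotential
  refine Set.indicator_apply_le' (fun hω => ?_) (fun _ => by positivity)
  have hX : 0 < X t ω / k' := div_pos (hk.trans_le (coe_lt_hitTimeLT_iff.1 hω t le_rfl)) hk
  have := Real.log_le_sub_one_of_pos hX
  have : X t ω / k' ≤ |X t ω| / k' := div_le_div_of_nonneg_right (le_abs_self _) hk.le
  linarith

theorem logPotential_zero {x0 : ℝ} (hx0 : k' ≤ x0) (hX0 : ∀ ω, X 0 ω = x0) :
    logPotential X k' 0 = fun _ => 1 + Real.log (x0 / k') := by
  ext ω
  have h0 : ((0 : ℕ) : ℕ∞) < hitTimeLT X k' ω :=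
    coe_lt_hitTimeLT_iff.2 fun s hs => by rw [Nat.le_zero.1 hs, hX0]; exact hx0
  simp only [logPotential, Set.indicator_apply, Set.mem_ofPred_eq, h0, if_true, hX0]

theorem integrable_logPotential {m0 : MeasurableSpace Ω} {μ : Measure Ω} (hk : 0 < k') {t : ℕ}
    (hX : Integrable (X t) μ) (hA : MeasurableSet {ω | (t : ℕ∞) < hitTimeLT X k' ω}) :
    Integrable (logPotential X k' t) μ := by
  refine Integrable.mono' (hX.abs.div_const k') ?_ (ae_of_all _ fun ω => ?_)
  · exact ((aemeasurable_const.add (hX.aemeasurable.div_const k').log).indicator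
      hA).aestronglyMeasurable
  · rw [Real.norm_of_nonneg (logPotential_nonneg hk t ω)]
    exact logPotential_le hk t ω

theorem indicator_sub_div_le_logPotential_sub_succ (hk : 0 < k') {t : ℕ} {ω : Ω}
    (hnonneg : (t : ℕ∞) < hitTimeLT X k' ω → 0 ≤ X (t + 1) ω) :
    {ω | (t : ℕ∞) < hitTimeLT X k' ω}.indicator (fun ω => (X t ω - X (t + 1) ω) / X t ω) ω
      ≤ logPotential X k' t ω - logPotential X k' (t + 1) ω := by
  by_cases hω : (t : ℕ∞) < hitTimeLT X k' ω
  · have hsucc : ((t + 1 : ℕ) : ℕ∞) < hitTimeLT X k' ω ↔ k' ≤ X (t + 1) ω := by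
      rw [coe_lt_hitTimeLT_iff]
      refine ⟨fun h => h _ le_rfl, fun h s hs => ?_⟩
      rcases Nat.of_le_succ hs with hs | rfl
      exacts [coe_lt_hitTimeLT_iff.1 hω s hs, h]
    simp only [logPotential, Set.indicator_apply, Set.mem_ofPred_eq, hω, hsucc, if_true]
    exact sub_div_le_one_add_log_div_sub_ite hk (coe_lt_hitTimeLT_iff.1 hω t le_rfl) (hnonneg hω)
  · have hsucc : ¬ ((t + 1 : ℕ) : ℕ∞) < hitTimeLT X k' ω := fun h => hω (lt_of_le_of_lt (by simp) h)
    simp only [logPotential, Set.indicator_apply, Set.mem_ofPred_eq, hω, hsucc, if_false,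
      sub_zero, le_refl]

end logPotential

theorem mul_measureReal_le_integral_logPotential_sub {Ω : Type*} {m0 : MeasurableSpace Ω}
    {μ : Measure Ω} [IsFiniteMeasure μ] {ℱ : Filtration ℕ m0} {X : ℕ → Ω → ℝ}
    (hadapt : Adapted ℱ X) (hint : ∀ t, Integrable (X t) μ) {k' δ : ℝ} (hk : 0 < k') (t : ℕ)
    (hnonneg : ∀ᵐ ω ∂μ, (t : ℕ∞) < hitTimeLT X k' ω → 0 ≤ X (t + 1) ω)
    (hdrift : ∀ᵐ ω ∂μ, (t : ℕ∞) < hitTimeLT X k' ω →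
      δ * X t ω ≤ X t ω - (μ[X (t + 1)|ℱ t]) ω) :
    δ * μ.real {ω | (t : ℕ∞) < hitTimeLT X k' ω}
      ≤ ∫ ω, logPotential X k' t ω ∂μ - ∫ ω, logPotential X k' (t + 1) ω ∂μ := by
  have hA (s : ℕ) := ℱ.le s _ (measurableSet_coe_lt_hitTimeLT hadapt k' s)
  have hY (s : ℕ) := integrable_logPotential hk (hint s) (hA s)
  have hXk : ∀ ω ∈ {ω | (t : ℕ∞) < hitTimeLT X k' ω}, k' ≤ X t ω :=
    fun ω hω => coe_lt_hitTimeLT_iff.1 hω t le_rfl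
  refine (mul_measureReal_le_setIntegral_div_of_condExp (ℱ.le t)
    (measurableSet_coe_lt_hitTimeLT hadapt k' t) (hadapt t) (hint (t + 1)) hk hXk hdrift).trans ?_
  rw [← integral_sub (hY t) (hY (t + 1)), ← integral_indicator (hA t)]
  refine integral_mono_ae ?_ ((hY t).sub (hY (t + 1))) ?_
  · exact (integrableOn_div_of_le (hA t) ((hint t).sub (hint (t + 1)))
      (hint t).aestronglyMeasurable hk hXk).integrable_indicator (hA t)
  · filter_upwards [hnonneg] with ω hω
    exact indicator_sub_div_le_logPotential_sub_succ hk hω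

/-- Multiplicative drift, fixed-target upper bound: if the adapted integrable process starts at
the deterministic value `x0 ≥ k' > 0`, is nonnegative up to the hitting time
`T = inf{t : X_t < k'}`, and satisfies the multiplicative drift condition
`X_t − E[X_{t+1} | F_t] ≥ δ·X_t` before time `T`, then `E[T] ≤ (1 + ln(x0/k'))/δ`. -/
theorem multiplicative_drift_fixed_target_upper
    {Ω : Type*} {m0 : MeasurableSpace Ω} (μ : Measure Ω) [IsProbabilityMeasure μ]
    (ℱ : Filtration ℕ m0) (X : ℕ → Ω → ℝ)
    (hadapt : Adapted ℱ X) (hint : ∀ t, Integrable (X t) μ)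
    (k' x0 : ℝ) (hk' : 0 < k') (hx0 : k' ≤ x0) (hX0 : ∀ ω, X 0 ω = x0)
    (hnonneg : ∀ᵐ ω ∂μ, ∀ t : ℕ, (t : ℕ∞) ≤ hitTimeLT X k' ω → 0 ≤ X t ω)
    (δ : ℝ) (hδ : 0 < δ)
    (hdrift : ∀ t : ℕ, ∀ᵐ ω ∂μ, (t : ℕ∞) < hitTimeLT X k' ω →
      δ * X t ω ≤ X t ω - (μ[X (t + 1)|ℱ t]) ω) :
    ∫⁻ ω, ((hitTimeLT X k' ω : ℕ∞) : ENNReal) ∂μ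
      ≤ ENNReal.ofReal ((1 + Real.log (x0 / k')) / δ) := by
  have hnonneg_succ (t : ℕ) : ∀ᵐ ω ∂μ, (t : ℕ∞) < hitTimeLT X k' ω → 0 ≤ X (t + 1) ω := by
    filter_upwards [hnonneg] with ω hω hlt
    exact hω (t + 1) (by rw [Nat.cast_succ]; exact Order.add_one_le_of_lt hlt)
  have hY0 : ∫ ω, logPotential X k' 0 ω ∂μ = 1 + Real.log (x0 / k') := by
    simp [logPotential_zero hx0 hX0]
  rw [lintegral_toENNReal_eq_tsum_measure_lt μ
    fun t => ℱ.le t _ (measurableSet_coe_lt_hitTimeLT hadapt k' t), ← hY0]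
  exact ENNReal.tsum_le_ofReal_div_of_mul_toReal_le_sub (fun t => measure_ne_top μ _)
    (fun t => integral_nonneg (logPotential_nonneg hk' t)) hδ fun t =>
    mul_measureReal_le_integral_logPotential_sub hadapt hint hk' t (hnonneg_succ t) (hdrift t)
end
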